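/- arXiv:1508.03907 — 13 statements merged into one kernel-verified Lean document; each statement's English description precedes it below -/
import Mathlib

section
/- Let C be a nonempty closed convex subset of a real Hilbert space H, let u ∈ H, and let (x_k) be a sequence in H such that every weak limit point of (x_k) belongs to C and ‖x_k − u‖ ≤ ‖u − P_C(u)‖ for all k. Then (x_k) converges strongly to P_C(u). -/
/-!
Writing `d = ‖u - P_C u‖`, the bound `‖x_k - u‖ ≤ d` gives
`‖x_k - P_C u‖² ≤ 2 ⟪x_k - u, u - P_C u⟫ + 2 d²`. Along a weakly convergent subsequence with
limit `p ∈ C`, the right-hand side tends to `2 ⟪p - P_C u, u - P_C u⟫`, which is `≤ 0` by the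
variational inequality of the projection, so that subsequence converges strongly to `P_C u`.
Bounded sequences in a Hilbert space have weakly convergent subsequences (sequential
Banach–Alaoglu on the separable closed span of the sequence, plus Riesz representation), hence
every subsequence of `(x_k)` has a further subsequence converging to `P_C u`.
-/

open RealInnerProductSpace Filter Topology

section WeakCompactness

variable {E : Type*} [NormedAddCommGroup E] [InnerProductSpace ℝ E] [CompleteSpace E]

theorem exists_subseq_tendsto_inner_of_separableSpace [TopologicalSpace.SeparableSpace E]
    (x : ℕ → E) {R : ℝ} (hR : ∀ k, ‖x k‖ ≤ R) :
    ∃ (p : E) (φ : ℕ → ℕ), StrictMono φ ∧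
      ∀ v, Tendsto (fun n => ⟪x (φ n), v⟫) atTop (𝓝 ⟪p, v⟫) := by
  set f : ℕ → WeakDual ℝ E := fun k => StrongDual.toWeakDual (InnerProductSpace.toDual ℝ E (x k))
  have hf : ∀ k, f k ∈ WeakDual.toStrongDual ⁻¹' Metric.closedBall 0 R := fun k => by
    simpa [f] using hR k
  obtain ⟨ℓ, -, φ, hφ, hlim⟩ := WeakDual.isSeqCompact_closedBall ℝ E 0 R hf
  refine ⟨(InnerProductSpace.toDual ℝ E).symm (WeakDual.toStrongDual ℓ), φ, hφ, fun v => ?_⟩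
  simpa [f, Function.comp_def] using ((WeakDual.eval_continuous v).tendsto ℓ).comp hlim

theorem exists_subseq_tendsto_inner (x : ℕ → E) {R : ℝ} (hR : ∀ k, ‖x k‖ ≤ R) :
    ∃ (p : E) (φ : ℕ → ℕ), StrictMono φ ∧
      ∀ v, Tendsto (fun n => ⟪x (φ n), v⟫) atTop (𝓝 ⟪p, v⟫) := by
  set K := (Submodule.span ℝ (Set.range x)).topologicalClosure
  have : CompleteSpace K := (Submodule.isClosed_topologicalClosure _).completeSpace_coe
  have : TopologicalSpace.SeparableSpace K := by
    have : TopologicalSpace.IsSeparable (K : Set E) :=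
      ((Set.countable_range x).isSeparable.span (R := ℝ)).closure
    exact this.separableSpace
  have hxK : ∀ k, x k ∈ K := fun k =>
    Submodule.le_topologicalClosure _ (Submodule.subset_span ⟨k, rfl⟩)
  obtain ⟨p, φ, hφ, hlim⟩ :=
    exists_subseq_tendsto_inner_of_separableSpace (fun k => (⟨x k, hxK k⟩ : K)) hR
  refine ⟨p, φ, hφ, fun v => ?_⟩
  simpa using hlim (K.orthogonalProjectionOnto v)

end WeakCompactness

section Projection

variable {E : Type*} [NormedAddCommGroup E] [InnerProductSpace ℝ E]

theorem real_inner_sub_le_zero_of_forall_norm_sub_le {K : Set E} (hK : Convex ℝ K) {u v : E}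
    (hv : v ∈ K) (hmin : ∀ w ∈ K, ‖u - v‖ ≤ ‖u - w‖) : ∀ w ∈ K, ⟪u - v, w - v⟫ ≤ 0 := by
  have : Nonempty K := ⟨⟨v, hv⟩⟩
  refine (norm_eq_iInf_iff_real_inner_le_zero hK hv).1 (le_antisymm ?_ ?_)
  · exact le_ciInf fun w => hmin w w.2
  · exact ciInf_le ⟨0, Set.forall_mem_range.2 fun _ => norm_nonneg _⟩ (⟨v, hv⟩ : K)

theorem norm_sub_sq_le_of_norm_sub_le {u v y : E} (h : ‖y - u‖ ≤ ‖u - v‖) :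
    ‖y - v‖ ^ 2 ≤ 2 * ⟪y - u, u - v⟫ + 2 * ‖u - v‖ ^ 2 := by
  have hsplit : ‖y - v‖ ^ 2 = ‖y - u‖ ^ 2 + 2 * ⟪y - u, u - v⟫ + ‖u - v‖ ^ 2 := by
    rw [← norm_add_sq_real, sub_add_sub_cancel]
  nlinarith [norm_nonneg (y - u)]

theorem tendsto_of_tendsto_inner_of_norm_sub_le {z : ℕ → E} {p u v : E}
    (hz : ∀ w, Tendsto (fun n => ⟪z n, w⟫) atTop (𝓝 ⟪p, w⟫))
    (hbd : ∀ n, ‖z n - u‖ ≤ ‖u - v‖) (hp : ⟪u - v, p - v⟫ ≤ 0) :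
    Tendsto z atTop (𝓝 v) := by
  set g : ℕ → ℝ := fun n => 2 * ⟪z n - u, u - v⟫ + 2 * ‖u - v‖ ^ 2
  have hg : Tendsto g atTop (𝓝 (2 * ⟪p - v, u - v⟫)) := by
    have h := ((hz (u - v)).sub_const ⟪u, u - v⟫).const_mul 2 |>.add_const (2 * ‖u - v‖ ^ 2)
    convert h using 1
    · ext n; simp [g, inner_sub_left]
    · have hsq : ‖u - v‖ ^ 2 = ⟪u, u - v⟫ - ⟪v, u - v⟫ := by
        rw [← inner_sub_left, real_inner_self_eq_norm_sq]
      rw [inner_sub_left, hsq]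
      congr 1
      ring
  have hsq : ∀ n, ‖z n - v‖ ^ 2 ≤ g n := fun n => norm_sub_sq_le_of_norm_sub_le (hbd n)
  have hlim0 : 2 * ⟪p - v, u - v⟫ = 0 := by
    refine le_antisymm (by rw [real_inner_comm]; linarith) ?_
    exact ge_of_tendsto hg (Eventually.of_forall fun n => (sq_nonneg _).trans (hsq n))
  rw [hlim0] at hg
  have : Tendsto (fun n => ‖z n - v‖ ^ 2) atTop (𝓝 0) :=
    squeeze_zero (fun n => sq_nonneg _) hsq hg
  rw [tendsto_iff_norm_sub_tendsto_zero]
  simpa [Real.sqrt_sq (norm_nonneg _)] using this.sqrt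

end Projection

theorem stmt_2_general {H : Type*} [NormedAddCommGroup H] [InnerProductSpace ℝ H] [CompleteSpace H]
    (C : Set H) (hconv : Convex ℝ C)
    (P : H → H)
    (hP : ∀ x : H, P x ∈ C ∧ ∀ y ∈ C, ‖x - P x‖ ≤ ‖x - y‖)
    (u : H) (x : ℕ → H)
    (hweak : ∀ p : H, (∃ φ : ℕ → ℕ, StrictMono φ ∧
        ∀ v : H, Tendsto (fun n => ⟪x (φ n), v⟫) atTop (𝓝 ⟪p, v⟫)) → p ∈ C)
    (hbd : ∀ k, ‖x k - u‖ ≤ ‖u - P u‖) :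
    Tendsto x atTop (𝓝 (P u)) := by
  obtain ⟨hPuC, hPmin⟩ := hP u
  have hvi := real_inner_sub_le_zero_of_forall_norm_sub_le hconv hPuC hPmin
  refine tendsto_of_subseq_tendsto fun ns hns => ?_
  obtain ⟨ms, -, hms⟩ := strictMono_subseq_of_tendsto_atTop hns
  have hR : ∀ k, ‖x (ns (ms k))‖ ≤ ‖u‖ + ‖u - P u‖ := fun k =>
    (norm_le_norm_add_norm_sub' _ u).trans (by gcongr; exact hbd _)
  obtain ⟨p, φ, hφ, hp⟩ := exists_subseq_tendsto_inner _ hR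
  have hpC : p ∈ C := hweak p ⟨ns ∘ ms ∘ φ, hms.comp hφ, hp⟩
  exact ⟨ms ∘ φ, tendsto_of_tendsto_inner_of_norm_sub_le hp (fun n => hbd _) (hvi p hpC)⟩

/-- If every weak limit point of `(x_k)` lies in `C` and `‖x_k − u‖ ≤ ‖u − P_C u‖` for all `k`,
then `x_k → P_C u` strongly. -/
theorem stmt_2 {H : Type*} [NormedAddCommGroup H] [InnerProductSpace ℝ H] [CompleteSpace H]
    (C : Set H) (hne : C.Nonempty) (hcl : IsClosed C) (hconv : Convex ℝ C)
    (P : H → H)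
    (hP : ∀ x : H, P x ∈ C ∧ ∀ y ∈ C, ‖x - P x‖ ≤ ‖x - y‖)
    (u : H) (x : ℕ → H)
    (hweak : ∀ p : H, (∃ φ : ℕ → ℕ, StrictMono φ ∧
        ∀ v : H, Tendsto (fun n => ⟪x (φ n), v⟫) atTop (𝓝 ⟪p, v⟫)) → p ∈ C)
    (hbd : ∀ k, ‖x k - u‖ ≤ ‖u - P u‖) :
    Tendsto x atTop (𝓝 (P u)) :=
  stmt_2_general C hconv P hP u x hweak hbd
end

section
/- Let T : C → C be an (α, β, γ, δ)-symmetric generalized hybrid mapping on a nonempty closed convex subset C of a real Hilbert space, with Fix(T) nonempty, satisfying α + 2β + γ ≥ 0, α + β > 0, and δ ≥ 0. Then T is quasi-nonexpansive, i.e., ‖Tx − p‖ ≤ ‖x − p‖ for all x ∈ C and p ∈ Fix(T). -/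
/-!
Put `y = p` in the defining inequality. Since `T p = p`, it reads
`(α + β) ‖Tx - p‖² + (β + γ) ‖x - p‖² + δ ‖x - Tx‖² ≤ 0`; dropping the `δ`-term and using
`-(β + γ) ≤ α + β` gives `(α + β) ‖Tx - p‖² ≤ (α + β) ‖x - p‖²`; divide by `α + β > 0`.
-/

lemma le_of_symmetricHybrid_ineq {α β γ δ a b c : ℝ}
    (h : α * a + β * (b + a) + γ * b + δ * c ≤ 0)
    (h1 : α + 2 * β + γ ≥ 0) (h2 : α + β > 0) (h3 : δ ≥ 0) (hb : 0 ≤ b) (hc : 0 ≤ c) :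
    a ≤ b := by
  have hδc : 0 ≤ δ * c := mul_nonneg h3 hc
  have hscaled : (α + β) * a ≤ (α + β) * b := by nlinarith [mul_nonneg h1 hb]
  exact le_of_mul_le_mul_left hscaled h2

lemma norm_apply_sub_le_of_symmetricHybrid {E : Type*} [SeminormedAddCommGroup E]
    {T : E → E} {x p : E} (hp : T p = p) {α β γ δ : ℝ}
    (hhyb : α * ‖T x - T p‖ ^ 2 + β * (‖x - T p‖ ^ 2 + ‖p - T x‖ ^ 2) + γ * ‖x - p‖ ^ 2
        + δ * (‖x - T x‖ ^ 2 + ‖p - T p‖ ^ 2) ≤ 0)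
    (h1 : α + 2 * β + γ ≥ 0) (h2 : α + β > 0) (h3 : δ ≥ 0) :
    ‖T x - p‖ ≤ ‖x - p‖ := by
  rw [hp, sub_self, norm_zero, norm_sub_rev p] at hhyb
  have hsq : ‖T x - p‖ ^ 2 ≤ ‖x - p‖ ^ 2 :=
    le_of_symmetricHybrid_ineq (c := ‖x - T x‖ ^ 2 + 0 ^ 2) hhyb h1 h2 h3 (by positivity)
      (by positivity)
  exact (sq_le_sq₀ (norm_nonneg _) (norm_nonneg _)).mp hsq

theorem stmt_4_general {H : Type*} [NormedAddCommGroup H]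
    (C : Set H)
    (T : H → H)
    (α β γ δ : ℝ)
    (hhyb : ∀ x ∈ C, ∀ y ∈ C,
      α * ‖T x - T y‖ ^ 2 + β * (‖x - T y‖ ^ 2 + ‖y - T x‖ ^ 2) + γ * ‖x - y‖ ^ 2
        + δ * (‖x - T x‖ ^ 2 + ‖y - T y‖ ^ 2) ≤ 0)
    (h1 : α + 2 * β + γ ≥ 0) (h2 : α + β > 0) (h3 : δ ≥ 0) :
    ∀ x ∈ C, ∀ p ∈ {x ∈ C | T x = x}, ‖T x - p‖ ≤ ‖x - p‖ := by
  rintro x hx p ⟨hpC, hpT⟩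
  exact norm_apply_sub_le_of_symmetricHybrid hpT (hhyb x hx p hpC) h1 h2 h3

/-- A symmetric generalized hybrid mapping with `α + 2β + γ ≥ 0`, `α + β > 0`, `δ ≥ 0`
and a fixed point is quasi-nonexpansive. -/
theorem stmt_4 {H : Type*} [NormedAddCommGroup H] [InnerProductSpace ℝ H] [CompleteSpace H]
    (C : Set H) (hne : C.Nonempty) (hcl : IsClosed C) (hconv : Convex ℝ C)
    (T : H → H) (hT : ∀ x ∈ C, T x ∈ C)
    (α β γ δ : ℝ)
    (hhyb : ∀ x ∈ C, ∀ y ∈ C,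
      α * ‖T x - T y‖ ^ 2 + β * (‖x - T y‖ ^ 2 + ‖y - T x‖ ^ 2) + γ * ‖x - y‖ ^ 2
        + δ * (‖x - T x‖ ^ 2 + ‖y - T y‖ ^ 2) ≤ 0)
    (h1 : α + 2 * β + γ ≥ 0) (h2 : α + β > 0) (h3 : δ ≥ 0)
    (hfix : ({x ∈ C | T x = x}).Nonempty) :
    ∀ x ∈ C, ∀ p ∈ {x ∈ C | T x = x}, ‖T x - p‖ ≤ ‖x - p‖ :=
  stmt_4_general C T α β γ δ hhyb h1 h2 h3
end

section
/- Let T : C → C be an (α, β, γ, δ)-symmetric generalized hybrid mapping on a nonempty closed convex subset C of a real Hilbert space with Fix(T) ≠ ∅, satisfying α + 2β + γ ≥ 0, α + β > 0, and δ ≥ 0. Then I − T is demiclosed at 0: if (x_k) ⊆ C converges weakly to x̄ and x_k − T x_k → 0 strongly, then x̄ ∈ Fix(T). -/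
/-!
Put `x = x_k`, `y = x̄` in the hybrid inequality and write `u = x̄ - T x̄`: after expanding the
squares and discarding the terms `(α + 2β + γ)‖x_k - x̄‖²` and `(α + β + δ)‖x_k - T x_k‖²`,
which are nonnegative, `(α + β + δ)‖u‖²` is bounded by a combination of `⟪x_k - x̄, u⟫`, which
tends to `0` by weak convergence, and of inner products against `x_k - T x_k`, which tend to `0`
because a weakly convergent sequence is bounded. Since `α + β + δ > 0`, this forces `u = 0`;
and `x̄ ∈ C` because closed convex sets are weakly closed.
-/

open RealInnerProductSpace Filter Topology

section

variable {H : Type*} [NormedAddCommGroup H] [InnerProductSpace ℝ H]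

def IsSymmetricGeneralizedHybrid (C : Set H) (T : H → H) (α β γ δ : ℝ) : Prop :=
  ∀ x ∈ C, ∀ y ∈ C,
    α * ‖T x - T y‖ ^ 2 + β * (‖x - T y‖ ^ 2 + ‖y - T x‖ ^ 2) + γ * ‖x - y‖ ^ 2
      + δ * (‖x - T x‖ ^ 2 + ‖y - T y‖ ^ 2) ≤ 0

theorem Convex.mem_of_tendsto_inner [CompleteSpace H] {C : Set H} (hconv : Convex ℝ C)
    (hcl : IsClosed C) {ι : Type*} {l : Filter ι} [l.NeBot] {x : ι → H} {xbar : H}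
    (hxC : ∀ᶠ i in l, x i ∈ C) (hweak : ∀ v : H, Tendsto (fun i => ⟪x i, v⟫) l (𝓝 ⟪xbar, v⟫)) :
    xbar ∈ C := by
  by_contra hxbar
  obtain ⟨f, c, hf_xbar, hf_C⟩ := geometric_hahn_banach_point_closed hconv hcl hxbar
  obtain ⟨v, rfl⟩ := (InnerProductSpace.toDual ℝ H).surjective f
  simp only [InnerProductSpace.toDual_apply_apply] at hf_xbar hf_C
  have hc_le : c ≤ ⟪v, xbar⟫ := by
    refine ge_of_tendsto (by simpa only [real_inner_comm v] using hweak v) ?_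
    filter_upwards [hxC] with i hi using (hf_C _ hi).le
  exact hf_xbar.not_ge hc_le

theorem exists_norm_le_of_tendsto_inner [CompleteSpace H] {x : ℕ → H} {xbar : H}
    (hweak : ∀ v : H, Tendsto (fun k => ⟪x k, v⟫) atTop (𝓝 ⟪xbar, v⟫)) :
    ∃ M, ∀ k, ‖x k‖ ≤ M := by
  have hpointwise : ∀ v : H, ∃ Cv, ∀ k, ‖innerSL ℝ (x k) v‖ ≤ Cv := fun v => by
    obtain ⟨Cv, hCv⟩ := (hweak v).norm.bddAbove_range
    exact ⟨Cv, fun k => hCv ⟨k, rfl⟩⟩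
  obtain ⟨M, hM⟩ := banach_steinhaus hpointwise
  exact ⟨M, fun k => innerSL_apply_norm ℝ (x k) ▸ hM k⟩

theorem tendsto_inner_zero_of_norm_le {ι : Type*} {l : Filter ι} {a b : ι → H} {M : ℝ}
    (ha : ∀ i, ‖a i‖ ≤ M) (hb : Tendsto b l (𝓝 0)) :
    Tendsto (fun i => ⟪a i, b i⟫) l (𝓝 0) := by
  have hMb : Tendsto (fun i => M * ‖b i‖) l (𝓝 0) := by
    simpa using (tendsto_zero_iff_norm_tendsto_zero.mp hb).const_mul M
  refine squeeze_zero_norm (fun i => ?_) hMb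
  calc ‖⟪a i, b i⟫‖ ≤ ‖a i‖ * ‖b i‖ := abs_real_inner_le_norm _ _
    _ ≤ M * ‖b i‖ := mul_le_mul_of_nonneg_right (ha i) (norm_nonneg _)

theorem norm_add_sub_sq_real (d u e : H) :
    ‖d + u - e‖ ^ 2 = ‖d‖ ^ 2 + ‖u‖ ^ 2 + ‖e‖ ^ 2 + 2 * ⟪d, u⟫ - 2 * ⟪d, e⟫ - 2 * ⟪u, e⟫ := by
  rw [norm_sub_sq_real, norm_add_sq_real, inner_add_left]
  ring

theorem IsSymmetricGeneralizedHybrid.mul_norm_sub_sq_le {C : Set H} {T : H → H}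
    {α β γ δ : ℝ} (hT : IsSymmetricGeneralizedHybrid C T α β γ δ) (h1 : 0 ≤ α + 2 * β + γ)
    (h2 : 0 ≤ α + β + δ) {x y : H} (hx : x ∈ C) (hy : y ∈ C) :
    (α + β + δ) * ‖y - T y‖ ^ 2 ≤
      2 * (α + β) * ⟪x - y, x - T x⟫ - 2 * (α + β) * ⟪x - y, y - T y⟫
        + 2 * α * ⟪y - T y, x - T x⟫ := by
  have hxy := hT x hx y hy
  set d := x - y
  set e := x - T x
  set u := y - T y
  rw [show T x - T y = d + u - e by simp only [d, e, u]; abel,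
    show x - T y = d + u by simp only [d, u]; abel,
    show y - T x = e - d by simp only [d, e]; abel,
    norm_add_sub_sq_real, norm_add_sq_real d u, norm_sub_sq_real e d, real_inner_comm d e] at hxy
  nlinarith [mul_nonneg h1 (sq_nonneg ‖d‖), mul_nonneg h2 (sq_nonneg ‖e‖)]

end

theorem stmt_5_general {H : Type*} [NormedAddCommGroup H] [InnerProductSpace ℝ H] [CompleteSpace H]
    (C : Set H) (hcl : IsClosed C) (hconv : Convex ℝ C)
    (T : H → H)
    (α β γ δ : ℝ)
    (hhyb : ∀ x ∈ C, ∀ y ∈ C,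
      α * ‖T x - T y‖ ^ 2 + β * (‖x - T y‖ ^ 2 + ‖y - T x‖ ^ 2) + γ * ‖x - y‖ ^ 2
        + δ * (‖x - T x‖ ^ 2 + ‖y - T y‖ ^ 2) ≤ 0)
    (h1 : α + 2 * β + γ ≥ 0) (h2 : α + β > 0) (h3 : δ ≥ 0)
    (x : ℕ → H) (hxC : ∀ k, x k ∈ C) (xbar : H)
    (hweak : ∀ v : H, Tendsto (fun k => ⟪x k, v⟫) atTop (𝓝 ⟪xbar, v⟫))
    (hstrong : Tendsto (fun k => ‖x k - T (x k)‖) atTop (𝓝 0)) :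
    xbar ∈ C ∧ T xbar = xbar := by
  have hxbarC : xbar ∈ C := hconv.mem_of_tendsto_inner hcl (l := atTop) (.of_forall hxC) hweak
  obtain ⟨M, hM⟩ := exists_norm_le_of_tendsto_inner hweak
  set u := xbar - T xbar
  have hpos : 0 < α + β + δ := by linarith
  have he : Tendsto (fun k => x k - T (x k)) atTop (𝓝 0) :=
    tendsto_zero_iff_norm_tendsto_zero.mpr hstrong
  have hde : Tendsto (fun k => ⟪x k - xbar, x k - T (x k)⟫) atTop (𝓝 0) :=
    tendsto_inner_zero_of_norm_le (M := M + ‖xbar‖)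
      (fun k => (norm_sub_le _ _).trans (by linarith [hM k])) he
  have hdu : Tendsto (fun k => ⟪x k - xbar, u⟫) atTop (𝓝 0) := by
    simpa only [inner_sub_left, sub_self] using (hweak u).sub_const ⟪xbar, u⟫
  have hue : Tendsto (fun k => ⟪u, x k - T (x k)⟫) atTop (𝓝 0) :=
    tendsto_inner_zero_of_norm_le (fun _ => le_refl ‖u‖) he
  have hlim : Tendsto (fun k => 2 * (α + β) * ⟪x k - xbar, x k - T (x k)⟫
      - 2 * (α + β) * ⟪x k - xbar, u⟫ + 2 * α * ⟪u, x k - T (x k)⟫) atTop (𝓝 0) := by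
    simpa using ((hde.const_mul (2 * (α + β))).sub (hdu.const_mul (2 * (α + β)))).add
      (hue.const_mul (2 * α))
  have hle : (α + β + δ) * ‖u‖ ^ 2 ≤ 0 := ge_of_tendsto' hlim fun k =>
    IsSymmetricGeneralizedHybrid.mul_norm_sub_sq_le hhyb h1 hpos.le (hxC k) hxbarC
  have hu : u = 0 := by
    simpa using le_antisymm (nonpos_of_mul_nonpos_right hle hpos) (sq_nonneg ‖u‖)
  exact ⟨hxbarC, (sub_eq_zero.mp hu).symm⟩

/-- For a symmetric generalized hybrid mapping with `α + 2β + γ ≥ 0`, `α + β > 0`, `δ ≥ 0`,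
`I − T` is demiclosed at `0`. -/
theorem stmt_5 {H : Type*} [NormedAddCommGroup H] [InnerProductSpace ℝ H] [CompleteSpace H]
    (C : Set H) (hne : C.Nonempty) (hcl : IsClosed C) (hconv : Convex ℝ C)
    (T : H → H) (hT : ∀ x ∈ C, T x ∈ C)
    (α β γ δ : ℝ)
    (hhyb : ∀ x ∈ C, ∀ y ∈ C,
      α * ‖T x - T y‖ ^ 2 + β * (‖x - T y‖ ^ 2 + ‖y - T x‖ ^ 2) + γ * ‖x - y‖ ^ 2
        + δ * (‖x - T x‖ ^ 2 + ‖y - T y‖ ^ 2) ≤ 0)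
    (h1 : α + 2 * β + γ ≥ 0) (h2 : α + β > 0) (h3 : δ ≥ 0)
    (hfix : ({x ∈ C | T x = x}).Nonempty)
    (x : ℕ → H) (hxC : ∀ k, x k ∈ C) (xbar : H)
    (hweak : ∀ v : H, Tendsto (fun k => ⟪x k, v⟫) atTop (𝓝 ⟪xbar, v⟫))
    (hstrong : Tendsto (fun k => ‖x k - T (x k)‖) atTop (𝓝 0)) :
    xbar ∈ C ∧ T xbar = xbar :=
  stmt_5_general C hcl hconv T α β γ δ hhyb h1 h2 h3 x hxC xbar hweak hstrong
end

section
/- Let C be a nonempty closed convex subset of a real Hilbert space, f : C × C → ℝ an equilibrium bifunction with f(x,·) convex, lower semicontinuous, and subdifferentiable on C for each x, let ρ > 0, and let x ∈ C. If y = argmin{ f(x, z) + (ρ/2)‖z − x‖² : z ∈ C }, then for every w ∈ ∂₂f(x, x) one has ‖y − x‖ ≤ (2/ρ)‖w‖. -/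
open RealInnerProductSpace

theorem norm_le_two_div_mul_norm_of_inner_add_sq_nonpos {E : Type*} [NormedAddCommGroup E]
    [InnerProductSpace ℝ E] {ρ : ℝ} (hρ : 0 < ρ) {w d : E}
    (h : ⟪w, d⟫ + ρ / 2 * ‖d‖ ^ 2 ≤ 0) : ‖d‖ ≤ 2 / ρ * ‖w‖ := by
  have hcs : -(‖w‖ * ‖d‖) ≤ ⟪w, d⟫ := neg_le_of_abs_le (abs_real_inner_le_norm w d)
  have hquad : ρ / 2 * ‖d‖ * ‖d‖ ≤ ‖w‖ * ‖d‖ := by nlinarith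
  rcases (norm_nonneg d).eq_or_lt with hd | hd
  · rw [← hd]; positivity
  · have hlin : ρ / 2 * ‖d‖ ≤ ‖w‖ := le_of_mul_le_mul_right hquad hd
    rw [div_mul_eq_mul_div, le_div_iff₀ hρ]
    linarith

theorem stmt_6_general {H : Type*} [NormedAddCommGroup H] [InnerProductSpace ℝ H]
    (C : Set H)
    (f : H → H → ℝ) (hf0 : ∀ x ∈ C, f x x = 0)
    (ρ : ℝ) (hρ : 0 < ρ) (x : H) (hx : x ∈ C)
    (y : H) (hyC : y ∈ C)
    (hymin : ∀ z ∈ C, f x y + ρ / 2 * ‖y - x‖ ^ 2 ≤ f x z + ρ / 2 * ‖z - x‖ ^ 2)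
    (w : H) (hw : ∀ v ∈ C, f x v ≥ f x x + ⟪w, v - x⟫) :
    ‖y - x‖ ≤ 2 / ρ * ‖w‖ := by
  -- Compare `y` with the competitor `z = x`, then bound `f x y` below by the subgradient `w`.
  have hcompare := hymin x hx
  rw [hf0 x hx, sub_self, norm_zero] at hcompare
  have hsubgrad := hw y hyC
  rw [hf0 x hx, zero_add] at hsubgrad
  exact norm_le_two_div_mul_norm_of_inner_add_sq_nonpos hρ (by linarith)

/-- If `y` minimizes `f(x,·) + (ρ/2)‖·−x‖²` over `C`, then `‖y − x‖ ≤ (2/ρ)‖w‖`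
for every `w ∈ ∂₂ f(x, x)`. -/
theorem stmt_6 {H : Type*} [NormedAddCommGroup H] [InnerProductSpace ℝ H] [CompleteSpace H]
    (C : Set H) (hne : C.Nonempty) (hcl : IsClosed C) (hconv : Convex ℝ C)
    (f : H → H → ℝ) (hf0 : ∀ x ∈ C, f x x = 0)
    (hconvf : ∀ x ∈ C, ConvexOn ℝ C (f x))
    (hlsc : ∀ x ∈ C, LowerSemicontinuousOn (f x) C)
    (hsubdiff : ∀ x ∈ C, ∀ u ∈ C, ∃ w : H, ∀ v ∈ C, f x v ≥ f x u + ⟪w, v - u⟫)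
    (ρ : ℝ) (hρ : 0 < ρ) (x : H) (hx : x ∈ C)
    (y : H) (hyC : y ∈ C)
    (hymin : ∀ z ∈ C, f x y + ρ / 2 * ‖y - x‖ ^ 2 ≤ f x z + ρ / 2 * ‖z - x‖ ^ 2)
    (w : H) (hw : ∀ v ∈ C, f x v ≥ f x x + ⟪w, v - x⟫) :
    ‖y - x‖ ≤ 2 / ρ * ‖w‖ :=
  stmt_6_general C f hf0 ρ hρ x hx y hyC hymin w hw
end

section
/- Let f satisfy f(x,x)=0, joint weak continuity on Ω×Ω (where Ω is an open convex set containing C), and f(x,·) convex, lower semicontinuous, and subdifferentiable on C for each x ∈ C. Let (x_k) ⊆ C be bounded and ρ > 0, and define y_k = argmin{ f(x_k, y) + (ρ/2)‖y − x_k‖² : y ∈ C }. Then (y_k) is bounded. -/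
/-!
Suppose `(y_k)` were unbounded, so that along a subsequence `t_k = ‖y_k - x_k‖ → ∞`. Comparing
`y_k` with the competitor `z = x_k` gives `f(x_k, y_k) ≤ -(ρ/2) t_k²`, and convexity of `f(x_k, ·)`
with `f(x_k, x_k) = 0` transfers this to the point `u_k ∈ [x_k, y_k]` at distance `1` from `x_k`:
`f(x_k, u_k) ≤ -(ρ/2) t_k → -∞`. But `(x_k)` and `(u_k)` are bounded, so a further subsequence
converges weakly to points of the (weakly closed) set `C`, where joint weak continuity forces
`f(x_k, u_k)` to converge to a finite limit.
-/

open RealInnerProductSpace Filter Topology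

section WeakConvergence

variable {H : Type*} [NormedAddCommGroup H] [InnerProductSpace ℝ H]

def WeakTendsto (a : ℕ → H) (z : H) : Prop :=
  ∀ v : H, Tendsto (fun k => ⟪a k, v⟫) atTop (𝓝 ⟪z, v⟫)

theorem WeakTendsto.comp_strictMono {a : ℕ → H} {z : H} (h : WeakTendsto a z) {φ : ℕ → ℕ}
    (hφ : StrictMono φ) : WeakTendsto (a ∘ φ) z :=
  fun v => (h v).comp hφ.tendsto_atTop

variable [CompleteSpace H]

theorem exists_strictMono_weakTendsto_of_separableSpace [TopologicalSpace.SeparableSpace H]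
    {a : ℕ → H} {R : ℝ} (hR : ∀ n, ‖a n‖ ≤ R) :
    ∃ z φ, StrictMono φ ∧ WeakTendsto (a ∘ φ) z := by
  have hball : ∀ n, StrongDual.toWeakDual (innerSL ℝ (a n)) ∈
      WeakDual.toStrongDual ⁻¹' Metric.closedBall (0 : StrongDual ℝ H) R := by
    intro n
    simpa using hR n
  obtain ⟨L, -, φ, hφ, hL⟩ := WeakDual.isSeqCompact_closedBall ℝ H 0 R hball
  refine ⟨(InnerProductSpace.toDual ℝ H).symm (WeakDual.toStrongDual L), φ, hφ, fun v => ?_⟩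
  rw [InnerProductSpace.toDual_symm_apply]
  exact ((WeakDual.eval_continuous v).tendsto L).comp hL

theorem exists_strictMono_weakTendsto {a : ℕ → H} {R : ℝ} (hR : ∀ n, ‖a n‖ ≤ R) :
    ∃ z φ, StrictMono φ ∧ WeakTendsto (a ∘ φ) z := by
  set K := (Submodule.span ℝ (Set.range a)).topologicalClosure
  have haK : ∀ n, a n ∈ K :=
    fun n => Submodule.le_topologicalClosure _ (Submodule.subset_span ⟨n, rfl⟩)
  have : CompleteSpace K := (Submodule.isClosed_topologicalClosure _).completeSpace_coe
  have : TopologicalSpace.SeparableSpace K :=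
    (Set.countable_range a).isSeparable.span.closure.separableSpace
  obtain ⟨z, φ, hφ, hz⟩ :=
    exists_strictMono_weakTendsto_of_separableSpace (a := fun n => (⟨a n, haK n⟩ : K)) hR
  -- Testing against `v` is the same as testing against its projection onto `K`.
  refine ⟨z, φ, hφ, fun v => ?_⟩
  simpa using hz (K.orthogonalProjectionOnto v)

theorem Convex.mem_of_weakTendsto {C : Set H} (hconv : Convex ℝ C) (hcl : IsClosed C)
    {a : ℕ → H} {z : H} (ha : ∀ n, a n ∈ C) (hz : WeakTendsto a z) : z ∈ C := by
  by_contra hzC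
  obtain ⟨g, r, hgz, hgC⟩ := geometric_hahn_banach_point_closed hconv hcl hzC
  set w := (InnerProductSpace.toDual ℝ H).symm g
  have hg : ∀ h, g h = ⟪h, w⟫ := fun h => by
    rw [real_inner_comm, InnerProductSpace.toDual_symm_apply]
  have hrz : r ≤ ⟪z, w⟫ :=
    ge_of_tendsto (hz w) (Eventually.of_forall fun n => (hg (a n) ▸ hgC _ (ha n)).le)
  linarith [hg z]

end WeakConvergence

section JointWeakContinuity

variable {H : Type*} [NormedAddCommGroup H] [InnerProductSpace ℝ H]

def JointlyWeaklySeqContinuousOn (f : H → H → ℝ) (S : Set H) : Prop :=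
  ∀ x ∈ S, ∀ y ∈ S, ∀ (xk yk : ℕ → H), (∀ k, xk k ∈ S) → (∀ k, yk k ∈ S) →
    WeakTendsto xk x → WeakTendsto yk y → Tendsto (fun k => f (xk k) (yk k)) atTop (𝓝 (f x y))

theorem JointlyWeaklySeqContinuousOn.mono {f : H → H → ℝ} {S T : Set H}
    (hf : JointlyWeaklySeqContinuousOn f T) (hST : S ⊆ T) : JointlyWeaklySeqContinuousOn f S :=
  fun x hx y hy xk yk hxk hyk => hf x (hST hx) y (hST hy) xk yk (fun k => hST (hxk k))
    (fun k => hST (hyk k))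

theorem JointlyWeaklySeqContinuousOn.not_tendsto_atBot [CompleteSpace H] {f : H → H → ℝ}
    {C : Set H} (hf : JointlyWeaklySeqContinuousOn f C) (hconv : Convex ℝ C) (hcl : IsClosed C)
    {a b : ℕ → H} (ha : ∀ n, a n ∈ C) (hb : ∀ n, b n ∈ C) {R : ℝ} (haR : ∀ n, ‖a n‖ ≤ R)
    (hbR : ∀ n, ‖b n‖ ≤ R) : ¬Tendsto (fun n => f (a n) (b n)) atTop atBot := by
  intro hbot
  obtain ⟨x, φ, hφ, hx⟩ := exists_strictMono_weakTendsto haR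
  obtain ⟨y, ψ, hψ, hy⟩ := exists_strictMono_weakTendsto fun n => hbR (φ n)
  have hx' := hx.comp_strictMono hψ
  have hxC := hconv.mem_of_weakTendsto hcl (fun n => ha _) hx'
  have hyC := hconv.mem_of_weakTendsto hcl (fun n => hb _) hy
  exact not_tendsto_nhds_of_tendsto_atBot (hbot.comp (hφ.comp hψ).tendsto_atTop) _
    (hf x hxC y hyC _ _ (fun n => ha _) (fun n => hb _) hx' hy)

end JointWeakContinuity

theorem ConvexOn.exists_norm_sub_eq_one_le_div {E : Type*} [NormedAddCommGroup E]
    [NormedSpace ℝ E] {C : Set E} {g : E → ℝ} (hg : ConvexOn ℝ C g) {x y : E} (hx : x ∈ C)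
    (hy : y ∈ C) (hgx : g x = 0) (hxy : 1 ≤ ‖y - x‖) :
    ∃ u ∈ C, ‖u - x‖ = 1 ∧ g u ≤ g y / ‖y - x‖ := by
  set t := ‖y - x‖
  have ht : 0 < t := one_pos.trans_le hxy
  have hs : t⁻¹ ∈ Set.Icc (0 : ℝ) 1 := ⟨inv_nonneg.mpr ht.le, inv_le_one_of_one_le₀ hxy⟩
  refine ⟨x + t⁻¹ • (y - x), hg.1.add_smul_sub_mem hx hy hs, ?_, ?_⟩
  · rw [add_sub_cancel_left, norm_smul, Real.norm_of_nonneg hs.1, inv_mul_cancel₀ ht.ne']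
  · have hcomb : x + t⁻¹ • (y - x) = (1 - t⁻¹) • x + t⁻¹ • y := by
      rw [smul_sub, sub_smul, one_smul]
      abel
    have := hg.2 hx hy (sub_nonneg.mpr hs.2) hs.1 (sub_add_cancel 1 t⁻¹)
    rw [← hcomb, hgx, smul_zero, zero_add, smul_eq_mul] at this
    rwa [div_eq_inv_mul]

theorem stmt_7_general {H : Type*} [NormedAddCommGroup H] [InnerProductSpace ℝ H] [CompleteSpace H]
    (C Ω : Set H) (hcl : IsClosed C) (hconv : Convex ℝ C) (hCΩ : C ⊆ Ω)
    (f : H → H → ℝ) (hf0 : ∀ x ∈ C, f x x = 0)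
    (hwc : ∀ x ∈ Ω, ∀ y ∈ Ω, ∀ (xk yk : ℕ → H), (∀ k, xk k ∈ Ω) → (∀ k, yk k ∈ Ω) →
      (∀ v : H, Tendsto (fun k => ⟪xk k, v⟫) atTop (𝓝 ⟪x, v⟫)) →
      (∀ v : H, Tendsto (fun k => ⟪yk k, v⟫) atTop (𝓝 ⟪y, v⟫)) →
      Tendsto (fun k => f (xk k) (yk k)) atTop (𝓝 (f x y)))
    (hconvf : ∀ x ∈ C, ConvexOn ℝ C (f x))
    (ρ : ℝ) (hρ : 0 < ρ)
    (x : ℕ → H) (hxC : ∀ k, x k ∈ C) (hxbd : ∃ M, ∀ k, ‖x k‖ ≤ M)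
    (y : ℕ → H) (hyC : ∀ k, y k ∈ C)
    (hymin : ∀ k, ∀ z ∈ C,
      f (x k) (y k) + ρ / 2 * ‖y k - x k‖ ^ 2 ≤ f (x k) z + ρ / 2 * ‖z - x k‖ ^ 2) :
    ∃ M, ∀ k, ‖y k‖ ≤ M := by
  obtain ⟨M, hM⟩ := hxbd
  by_contra! hunbdd
  choose ψ hψ using fun n : ℕ => hunbdd (n + 1 + M)
  have hdist : ∀ n : ℕ, (n : ℝ) + 1 ≤ ‖y (ψ n) - x (ψ n)‖ := fun n => by
    linarith [hψ n, hM (ψ n), norm_sub_norm_le (y (ψ n)) (x (ψ n))]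
  have hfy : ∀ n, f (x (ψ n)) (y (ψ n)) ≤ -(ρ / 2) * ‖y (ψ n) - x (ψ n)‖ ^ 2 := fun n => by
    have := hymin (ψ n) (x (ψ n)) (hxC _)
    rw [hf0 _ (hxC _), sub_self, norm_zero] at this
    linarith
  choose u huC hu hfu using fun n => (hconvf _ (hxC (ψ n))).exists_norm_sub_eq_one_le_div
    (hxC (ψ n)) (hyC (ψ n)) (hf0 _ (hxC _)) (by linarith [hdist n, n.cast_nonneg (α := ℝ)])
  have hfu_le : ∀ n : ℕ, f (x (ψ n)) (u n) ≤ -(ρ / 2) * (n + 1) := fun n => by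
    have ht := (n.cast_nonneg (α := ℝ)).trans_lt ((lt_add_one _).trans_le (hdist n))
    have : f (x (ψ n)) (y (ψ n)) / ‖y (ψ n) - x (ψ n)‖ ≤ -(ρ / 2) * ‖y (ψ n) - x (ψ n)‖ := by
      rw [div_le_iff₀ ht]
      linarith [hfy n]
    nlinarith [hfu n, hdist n]
  have hwcC : JointlyWeaklySeqContinuousOn f C := JointlyWeaklySeqContinuousOn.mono hwc hCΩ
  refine hwcC.not_tendsto_atBot hconv hcl (fun n => hxC (ψ n)) huC (R := M + 1)
    (fun n => by linarith [hM (ψ n)])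
    (fun n => by linarith [hM (ψ n), norm_le_norm_add_norm_sub' (u n) (x (ψ n)), hu n])
    (tendsto_atBot_mono hfu_le ?_)
  exact (tendsto_natCast_atTop_atTop.atTop_add tendsto_const_nhds).const_mul_atTop_of_neg
    (by linarith)

/-- If `(x_k) ⊆ C` is bounded and `y_k = argmin { f(x_k, y) + (ρ/2)‖y − x_k‖² : y ∈ C }`,
then `(y_k)` is bounded. -/
theorem stmt_7 {H : Type*} [NormedAddCommGroup H] [InnerProductSpace ℝ H] [CompleteSpace H]
    (C Ω : Set H) (hne : C.Nonempty) (hcl : IsClosed C) (hconv : Convex ℝ C)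
    (hΩopen : IsOpen Ω) (hΩconv : Convex ℝ Ω) (hCΩ : C ⊆ Ω)
    (f : H → H → ℝ) (hf0 : ∀ x ∈ C, f x x = 0)
    (hwc : ∀ x ∈ Ω, ∀ y ∈ Ω, ∀ (xk yk : ℕ → H), (∀ k, xk k ∈ Ω) → (∀ k, yk k ∈ Ω) →
      (∀ v : H, Tendsto (fun k => ⟪xk k, v⟫) atTop (𝓝 ⟪x, v⟫)) →
      (∀ v : H, Tendsto (fun k => ⟪yk k, v⟫) atTop (𝓝 ⟪y, v⟫)) →
      Tendsto (fun k => f (xk k) (yk k)) atTop (𝓝 (f x y)))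
    (hconvf : ∀ x ∈ C, ConvexOn ℝ C (f x))
    (hlsc : ∀ x ∈ C, LowerSemicontinuousOn (f x) C)
    (hsubdiff : ∀ x ∈ C, ∀ u ∈ C, ∃ w : H, ∀ v ∈ C, f x v ≥ f x u + ⟪w, v - u⟫)
    (ρ : ℝ) (hρ : 0 < ρ)
    (x : ℕ → H) (hxC : ∀ k, x k ∈ C) (hxbd : ∃ M, ∀ k, ‖x k‖ ≤ M)
    (y : ℕ → H) (hyC : ∀ k, y k ∈ C)
    (hymin : ∀ k, ∀ z ∈ C,
      f (x k) (y k) + ρ / 2 * ‖y k - x k‖ ^ 2 ≤ f (x k) z + ρ / 2 * ‖z - x k‖ ^ 2) :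
    ∃ M, ∀ k, ‖y k‖ ≤ M :=
  stmt_7_general C Ω hcl hconv hCΩ f hf0 hwc hconvf ρ hρ x hxC hxbd y hyC hymin
end

section
/- Let C be a nonempty closed convex subset of a real Hilbert space, f an equilibrium bifunction satisfying: f(x,·) convex and subdifferentiable for each x; f pseudomonotone on C with respect to Sol(C,f) (i.e., f(x, x*) ≤ 0 for all x ∈ C and x* ∈ Sol(C,f)); and f Lipschitz-type continuous with constants L₁, L₂ > 0 (i.e., f(x,y) + f(y,z) ≥ f(x,z) − L₁‖x−y‖² − L₂‖y−z‖² for all x,y,z ∈ C). Let ρ_k > 0, x_k ∈ C, y_k = argmin{ ρ_k f(x_k, y) + (1/2)‖y − x_k‖² : y ∈ C }, and z_k = argmin{ ρ_k f(y_k, y) + (1/2)‖y − x_k‖² : y ∈ C }. Then for every x* ∈ Sol(C,f): ‖z_k − x*‖² ≤ ‖x_k − x*‖² − (1 − 2ρ_k L₁)‖x_k − y_k‖² − (1 − 2ρ_k L₂)‖y_k − z_k‖². -/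
/-!
Both prox steps satisfy the variational inequality `⟪x - p, v - p⟫ ≤ g v - g p` of a convex
proximal problem. Testing the one for `y` at `v = z` and the one for `z` at `v = x*`, and
expanding `‖x - x*‖²` around `z` and `‖x - z‖²` around `y`, leaves
`‖z - x*‖² ≤ ‖x - x*‖² - ‖x - y‖² - ‖y - z‖² + 2ρ (f x z - f x y - f y z) + 2ρ f y x*`.
Pseudomonotonicity kills the last term and the Lipschitz-type condition bounds the bracket.
-/

open RealInnerProductSpace Filter Topology

lemma le_of_forall_pos_le_add_mul {a b c : ℝ} (h : ∀ t : ℝ, 0 < t → t ≤ 1 → a ≤ b + t * c) :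
    a ≤ b := by
  have hlim : Tendsto (fun t : ℝ => b + t * c) (𝓝[>] 0) (𝓝 b) := by
    have hcont : Continuous fun t : ℝ => b + t * c := by fun_prop
    simpa using (hcont.tendsto 0).mono_left nhdsWithin_le_nhds
  refine ge_of_tendsto hlim ?_
  filter_upwards [Ioc_mem_nhdsGT (zero_lt_one' ℝ)] with t ht using h t ht.1 ht.2

/-- Compare `p` with `(1 - t) • p + t • v ∈ C`, divide by `t` and let `t → 0⁺`. -/
lemma ConvexOn.inner_sub_le_of_isMinOn_prox {H : Type*} [NormedAddCommGroup H]
    [InnerProductSpace ℝ H] {C : Set H} {g : H → ℝ} (hg : ConvexOn ℝ C g) {x p : H} (hp : p ∈ C)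
    (hmin : IsMinOn (fun v => g v + 1 / 2 * ‖v - x‖ ^ 2) C p) {v : H} (hv : v ∈ C) :
    ⟪x - p, v - p⟫ ≤ g v - g p := by
  refine le_of_forall_pos_le_add_mul (c := ‖v - p‖ ^ 2 / 2) fun t ht ht1 => ?_
  have hseg := hg.2 hp hv (sub_nonneg.2 ht1) ht.le (by ring)
  have hprox := isMinOn_iff.1 hmin _ (hg.1 hp hv (sub_nonneg.2 ht1) ht.le (by ring))
  have hexpand : ‖(1 - t) • p + t • v - x‖ ^ 2
      = ‖p - x‖ ^ 2 - 2 * t * ⟪x - p, v - p⟫ + t ^ 2 * ‖v - p‖ ^ 2 := by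
    rw [show (1 - t) • p + t • v - x = (p - x) + t • (v - p) by module, norm_add_sq_real,
      real_inner_smul_right, norm_smul, Real.norm_of_nonneg ht.le, ← neg_sub x p,
      inner_neg_left]
    ring
  simp only [smul_eq_mul, hexpand] at hseg hprox
  nlinarith

theorem stmt_9_general {H : Type*} [NormedAddCommGroup H] [InnerProductSpace ℝ H]
    (C : Set H)
    (f : H → H → ℝ)
    (hconvf : ∀ x ∈ C, ConvexOn ℝ C (f x))
    (hpseudo : ∀ x ∈ C, ∀ xstar ∈ {p ∈ C | ∀ y ∈ C, f p y ≥ 0}, f x xstar ≤ 0)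
    (L₁ L₂ : ℝ)
    (hlip : ∀ x ∈ C, ∀ y ∈ C, ∀ z ∈ C,
      f x y + f y z ≥ f x z - L₁ * ‖x - y‖ ^ 2 - L₂ * ‖y - z‖ ^ 2)
    (ρ : ℝ) (hρ : 0 < ρ) (x : H) (hx : x ∈ C)
    (y : H) (hyC : y ∈ C)
    (hymin : ∀ v ∈ C, ρ * f x y + 1 / 2 * ‖y - x‖ ^ 2 ≤ ρ * f x v + 1 / 2 * ‖v - x‖ ^ 2)
    (z : H) (hzC : z ∈ C)
    (hzmin : ∀ v ∈ C, ρ * f y z + 1 / 2 * ‖z - x‖ ^ 2 ≤ ρ * f y v + 1 / 2 * ‖v - x‖ ^ 2)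
    (xstar : H) (hxstar : xstar ∈ {p ∈ C | ∀ v ∈ C, f p v ≥ 0}) :
    ‖z - xstar‖ ^ 2 ≤ ‖x - xstar‖ ^ 2 - (1 - 2 * ρ * L₁) * ‖x - y‖ ^ 2
      - (1 - 2 * ρ * L₂) * ‖y - z‖ ^ 2 := by
  have hvi_y : ⟪x - y, z - y⟫ ≤ ρ * f x z - ρ * f x y :=
    ((hconvf x hx).smul hρ.le).inner_sub_le_of_isMinOn_prox hyC (isMinOn_iff.2 hymin) hzC
  have hvi_z : ⟪x - z, xstar - z⟫ ≤ ρ * f y xstar - ρ * f y z :=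
    ((hconvf y hyC).smul hρ.le).inner_sub_le_of_isMinOn_prox hzC (isMinOn_iff.2 hzmin) hxstar.1
  have hsol : ρ * f y xstar ≤ 0 :=
    mul_nonpos_of_nonneg_of_nonpos hρ.le (hpseudo y hyC xstar hxstar)
  have hlipρ := mul_le_mul_of_nonneg_left (hlip x hx y hyC z hzC) hρ.le
  have hexpand_z : ‖x - xstar‖ ^ 2 = ‖x - z‖ ^ 2 - 2 * ⟪x - z, xstar - z⟫ + ‖z - xstar‖ ^ 2 := by
    have h := norm_sub_sq_real (x - z) (xstar - z)
    rwa [sub_sub_sub_cancel_right, norm_sub_rev xstar] at h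
  have hexpand_y : ‖x - z‖ ^ 2 = ‖x - y‖ ^ 2 - 2 * ⟪x - y, z - y⟫ + ‖y - z‖ ^ 2 := by
    have h := norm_sub_sq_real (x - y) (z - y)
    rwa [sub_sub_sub_cancel_right, norm_sub_rev z] at h
  linarith

/-- Extragradient estimate: for `x* ∈ Sol(C,f)`,
`‖z_k − x*‖² ≤ ‖x_k − x*‖² − (1 − 2ρ_k L₁)‖x_k − y_k‖² − (1 − 2ρ_k L₂)‖y_k − z_k‖²`. -/
theorem stmt_9 {H : Type*} [NormedAddCommGroup H] [InnerProductSpace ℝ H] [CompleteSpace H]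
    (C : Set H) (hne : C.Nonempty) (hcl : IsClosed C) (hconv : Convex ℝ C)
    (f : H → H → ℝ) (hf0 : ∀ x ∈ C, f x x = 0)
    (hconvf : ∀ x ∈ C, ConvexOn ℝ C (f x))
    (hsubdiff : ∀ x ∈ C, ∀ u ∈ C, ∃ w : H, ∀ v ∈ C, f x v ≥ f x u + ⟪w, v - u⟫)
    (hpseudo : ∀ x ∈ C, ∀ xstar ∈ {p ∈ C | ∀ y ∈ C, f p y ≥ 0}, f x xstar ≤ 0)
    (L₁ L₂ : ℝ) (hL₁ : 0 < L₁) (hL₂ : 0 < L₂)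
    (hlip : ∀ x ∈ C, ∀ y ∈ C, ∀ z ∈ C,
      f x y + f y z ≥ f x z - L₁ * ‖x - y‖ ^ 2 - L₂ * ‖y - z‖ ^ 2)
    (ρ : ℝ) (hρ : 0 < ρ) (x : H) (hx : x ∈ C)
    (y : H) (hyC : y ∈ C)
    (hymin : ∀ v ∈ C, ρ * f x y + 1 / 2 * ‖y - x‖ ^ 2 ≤ ρ * f x v + 1 / 2 * ‖v - x‖ ^ 2)
    (z : H) (hzC : z ∈ C)
    (hzmin : ∀ v ∈ C, ρ * f y z + 1 / 2 * ‖z - x‖ ^ 2 ≤ ρ * f y v + 1 / 2 * ‖v - x‖ ^ 2)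
    (xstar : H) (hxstar : xstar ∈ {p ∈ C | ∀ v ∈ C, f p v ≥ 0}) :
    ‖z - xstar‖ ^ 2 ≤ ‖x - xstar‖ ^ 2 - (1 - 2 * ρ * L₁) * ‖x - y‖ ^ 2
      - (1 - 2 * ρ * L₂) * ‖y - z‖ ^ 2 :=
  stmt_9_general C f hconvf hpseudo L₁ L₂ hlip ρ hρ x hx y hyC hymin z hzC hzmin xstar hxstar
end

section
/- Under the hypotheses of the extragradient estimate (pseudomonotone Lipschitz-type f with constants L₁, L₂ and 0 < ρ_k ≤ ρ̄ < min{1/(2L₁), 1/(2L₂)}), the extragradient step is Fejér monotone with respect to Sol(C,f): for y_k = argmin{ ρ_k f(x_k, y) + (1/2)‖y − x_k‖² : y ∈ C } and z_k = argmin{ ρ_k f(y_k, y) + (1/2)‖y − x_k‖² : y ∈ C }, one has ‖z_k − q‖ ≤ ‖x_k − q‖ for every q ∈ Sol(C,f). -/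
/-!
Each prox step minimizes a `1`-strongly convex function, hence grows quadratically away from
its minimizer. Testing this for `y` at `z` and for `z` at a solution `q`, adding, and bounding
`ρ f(x,z) - ρ f(x,y) - ρ f(y,z)` by the Lipschitz-type condition gives
`‖z - q‖² ≤ ‖x - q‖² - (1 - 2ρL₁)‖y - x‖² - (1 - 2ρL₂)‖z - y‖²`, where `f(y,q) ≤ 0` by
pseudomonotonicity. Both subtracted terms are nonnegative when `ρ < min (1/(2L₁)) (1/(2L₂))`.
-/

open RealInnerProductSpace Set Filter Topology

lemma le_of_forall_mem_Ioc_le_add_mul {a b c : ℝ} (h : ∀ t ∈ Ioc (0 : ℝ) 1, a ≤ b + t * c) :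
    a ≤ b := by
  have hlim : Tendsto (fun t : ℝ ↦ b + t * c) (𝓝[>] 0) (𝓝 b) := by
    refine Tendsto.mono_left ?_ nhdsWithin_le_nhds
    exact (continuous_const.add (continuous_id.mul continuous_const)).tendsto' 0 b (by simp)
  exact ge_of_tendsto hlim (eventually_of_mem (Ioc_mem_nhdsGT zero_lt_one) h)

lemma StrongConvexOn.add_mul_norm_sub_sq_le_of_isMinOn {E : Type*} [NormedAddCommGroup E]
    [NormedSpace ℝ E] {s : Set E} {f : E → ℝ} {m : ℝ} (hf : StrongConvexOn s m f) {z v : E}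
    (hz : z ∈ s) (hmin : IsMinOn f s z) (hv : v ∈ s) : f z + m / 2 * ‖v - z‖ ^ 2 ≤ f v := by
  refine le_of_forall_mem_Ioc_le_add_mul (c := m / 2 * ‖v - z‖ ^ 2) fun t ⟨ht₀, ht₁⟩ ↦ ?_
  have hmem := hf.1 hz hv (sub_nonneg.2 ht₁) ht₀.le (sub_add_cancel 1 t)
  have hseg := hf.2 hz hv (sub_nonneg.2 ht₁) ht₀.le (sub_add_cancel 1 t)
  have hle : f z ≤ f ((1 - t) • z + t • v) := hmin hmem
  rw [norm_sub_rev] at hseg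
  simp only [smul_eq_mul] at hseg
  have hscaled : t * (f z + m / 2 * ‖v - z‖ ^ 2) ≤ t * (f v + t * (m / 2 * ‖v - z‖ ^ 2)) := by
    nlinarith
  exact le_of_mul_le_mul_left hscaled ht₀

section

variable {E : Type*} [NormedAddCommGroup E] [InnerProductSpace ℝ E] {s : Set E}

lemma ConvexOn.strongConvexOn_add_half_norm_sub_sq {h : E → ℝ} (hh : ConvexOn ℝ s h) (x : E) :
    StrongConvexOn s 1 (fun w ↦ h w + 1 / 2 * ‖w - x‖ ^ 2) := by
  rw [strongConvexOn_iff_convex]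
  refine (hh.add (((innerₛₗ ℝ (-x)).convexOn hh.1).add_const (1 / 2 * ‖x‖ ^ 2))).congr
    fun w _ ↦ ?_
  simp only [Pi.add_apply, innerₛₗ_apply_apply, inner_neg_left, norm_sub_sq_real,
    real_inner_comm x]
  ring

lemma norm_sub_sq_le_of_extragradient {f : E → E → ℝ} {L₁ L₂ ρ : ℝ} {x y z q : E}
    (hx : ConvexOn ℝ s (f x)) (hy : ConvexOn ℝ s (f y))
    (hlip : f x y + f y z ≥ f x z - L₁ * ‖x - y‖ ^ 2 - L₂ * ‖y - z‖ ^ 2) (hρ : 0 ≤ ρ)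
    (hys : y ∈ s)
    (hymin : ∀ v ∈ s, ρ * f x y + 1 / 2 * ‖y - x‖ ^ 2 ≤ ρ * f x v + 1 / 2 * ‖v - x‖ ^ 2)
    (hzs : z ∈ s)
    (hzmin : ∀ v ∈ s, ρ * f y z + 1 / 2 * ‖z - x‖ ^ 2 ≤ ρ * f y v + 1 / 2 * ‖v - x‖ ^ 2)
    (hqs : q ∈ s) (hyq : f y q ≤ 0) :
    ‖z - q‖ ^ 2 ≤
      ‖x - q‖ ^ 2 - (1 - 2 * ρ * L₁) * ‖y - x‖ ^ 2 - (1 - 2 * ρ * L₂) * ‖z - y‖ ^ 2 := by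
  have hgrowth_y : ρ * f x y + 1 / 2 * ‖y - x‖ ^ 2 + 1 / 2 * ‖z - y‖ ^ 2
      ≤ ρ * f x z + 1 / 2 * ‖z - x‖ ^ 2 :=
    ((hx.smul hρ).strongConvexOn_add_half_norm_sub_sq x).add_mul_norm_sub_sq_le_of_isMinOn
      hys hymin hzs
  have hgrowth_z : ρ * f y z + 1 / 2 * ‖z - x‖ ^ 2 + 1 / 2 * ‖q - z‖ ^ 2
      ≤ ρ * f y q + 1 / 2 * ‖q - x‖ ^ 2 :=
    ((hy.smul hρ).strongConvexOn_add_half_norm_sub_sq x).add_mul_norm_sub_sq_le_of_isMinOn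
      hzs hzmin hqs
  rw [norm_sub_rev x y, norm_sub_rev y z] at hlip
  rw [norm_sub_rev q z, norm_sub_rev q x] at hgrowth_z
  nlinarith [mul_le_mul_of_nonneg_left hlip hρ, mul_nonpos_of_nonneg_of_nonpos hρ hyq]

end

lemma two_mul_mul_le_one_of_lt_one_div {ρ L : ℝ} (hρ : 0 ≤ ρ) (h : ρ < 1 / (2 * L)) :
    2 * ρ * L ≤ 1 := by
  rcases le_or_gt L 0 with hL | hL
  · nlinarith
  · rw [lt_div_iff₀ (by positivity)] at h
    linarith

theorem stmt_10_general {H : Type*} [NormedAddCommGroup H] [InnerProductSpace ℝ H]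
    (C : Set H)
    (f : H → H → ℝ)
    (hconvf : ∀ x ∈ C, ConvexOn ℝ C (f x))
    (hpseudo : ∀ x ∈ C, ∀ xstar ∈ {p ∈ C | ∀ y ∈ C, f p y ≥ 0}, f x xstar ≤ 0)
    (L₁ L₂ : ℝ)
    (hlip : ∀ x ∈ C, ∀ y ∈ C, ∀ z ∈ C,
      f x y + f y z ≥ f x z - L₁ * ‖x - y‖ ^ 2 - L₂ * ‖y - z‖ ^ 2)
    (ρ ρbar : ℝ) (hρpos : 0 < ρ) (hρbar : ρ ≤ ρbar)
    (hbar : ρbar < min (1 / (2 * L₁)) (1 / (2 * L₂)))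
    (x : H) (hx : x ∈ C)
    (y : H) (hyC : y ∈ C)
    (hymin : ∀ v ∈ C, ρ * f x y + 1 / 2 * ‖y - x‖ ^ 2 ≤ ρ * f x v + 1 / 2 * ‖v - x‖ ^ 2)
    (z : H) (hzC : z ∈ C)
    (hzmin : ∀ v ∈ C, ρ * f y z + 1 / 2 * ‖z - x‖ ^ 2 ≤ ρ * f y v + 1 / 2 * ‖v - x‖ ^ 2)
    (q : H) (hq : q ∈ {p ∈ C | ∀ v ∈ C, f p v ≥ 0}) :
    ‖z - q‖ ≤ ‖x - q‖ := by
  have hρL₁ : 2 * ρ * L₁ ≤ 1 := two_mul_mul_le_one_of_lt_one_div hρpos.le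
    (hρbar.trans_lt (hbar.trans_le (min_le_left _ _)))
  have hρL₂ : 2 * ρ * L₂ ≤ 1 := two_mul_mul_le_one_of_lt_one_div hρpos.le
    (hρbar.trans_lt (hbar.trans_le (min_le_right _ _)))
  have hest := norm_sub_sq_le_of_extragradient (hconvf x hx) (hconvf y hyC)
    (hlip x hx y hyC z hzC) hρpos.le hyC hymin hzC hzmin hq.1 (hpseudo y hyC q hq)
  have hsq : ‖z - q‖ ^ 2 ≤ ‖x - q‖ ^ 2 := by
    linarith [mul_nonneg (sub_nonneg.2 hρL₁) (sq_nonneg ‖y - x‖),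
      mul_nonneg (sub_nonneg.2 hρL₂) (sq_nonneg ‖z - y‖)]
  exact (sq_le_sq₀ (norm_nonneg _) (norm_nonneg _)).1 hsq

/-- Fejér monotonicity of the extragradient step: `‖z_k − q‖ ≤ ‖x_k − q‖`
for every `q ∈ Sol(C,f)`, when `0 < ρ_k ≤ ρ̄ < min{1/(2L₁), 1/(2L₂)}`. -/
theorem stmt_10 {H : Type*} [NormedAddCommGroup H] [InnerProductSpace ℝ H] [CompleteSpace H]
    (C : Set H) (hne : C.Nonempty) (hcl : IsClosed C) (hconv : Convex ℝ C)
    (f : H → H → ℝ) (hf0 : ∀ x ∈ C, f x x = 0)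
    (hconvf : ∀ x ∈ C, ConvexOn ℝ C (f x))
    (hsubdiff : ∀ x ∈ C, ∀ u ∈ C, ∃ w : H, ∀ v ∈ C, f x v ≥ f x u + ⟪w, v - u⟫)
    (hpseudo : ∀ x ∈ C, ∀ xstar ∈ {p ∈ C | ∀ y ∈ C, f p y ≥ 0}, f x xstar ≤ 0)
    (L₁ L₂ : ℝ) (hL₁ : 0 < L₁) (hL₂ : 0 < L₂)
    (hlip : ∀ x ∈ C, ∀ y ∈ C, ∀ z ∈ C,
      f x y + f y z ≥ f x z - L₁ * ‖x - y‖ ^ 2 - L₂ * ‖y - z‖ ^ 2)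
    (ρ ρbar : ℝ) (hρpos : 0 < ρ) (hρbar : ρ ≤ ρbar)
    (hbar : ρbar < min (1 / (2 * L₁)) (1 / (2 * L₂)))
    (x : H) (hx : x ∈ C)
    (y : H) (hyC : y ∈ C)
    (hymin : ∀ v ∈ C, ρ * f x y + 1 / 2 * ‖y - x‖ ^ 2 ≤ ρ * f x v + 1 / 2 * ‖v - x‖ ^ 2)
    (z : H) (hzC : z ∈ C)
    (hzmin : ∀ v ∈ C, ρ * f y z + 1 / 2 * ‖z - x‖ ^ 2 ≤ ρ * f y v + 1 / 2 * ‖v - x‖ ^ 2)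
    (q : H) (hq : q ∈ {p ∈ C | ∀ v ∈ C, f p v ≥ 0}) :
    ‖z - q‖ ≤ ‖x - q‖ :=
  stmt_10_general C f hconvf hpseudo L₁ L₂ hlip ρ ρbar hρpos hρbar hbar x hx y hyC hymin z hzC hzmin
    q hq
end

section
/- Let (x_k) be a sequence in a real Hilbert space H, x^g ∈ H, and suppose for each k the point x_{k+1} satisfies ⟨x − x_{k+1}, x^g − x_{k+1}⟩ ≤ 0 for all x in the set Q_k = {x ∈ H : ⟨x − x_k, x^g − x_k⟩ ≤ 0} (in particular x_{k+1} ∈ Q_k), and that (‖x_k − x^g‖) is bounded. Then ‖x_{k+1} − x_k‖² ≤ ‖x_{k+1} − x^g‖² − ‖x_k − x^g‖² for all k, the sequence (‖x_k − x^g‖) is nondecreasing and convergent, and ‖x_{k+1} − x_k‖ → 0. -/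
open RealInnerProductSpace Filter Topology

/-- The angle of the triangle `a b c` at `a` is obtuse. -/
lemma norm_sub_sq_le_of_inner_nonpos {E : Type*} [NormedAddCommGroup E] [InnerProductSpace ℝ E]
    {a b c : E} (h : ⟪b - a, c - a⟫ ≤ 0) :
    ‖b - a‖ ^ 2 ≤ ‖b - c‖ ^ 2 - ‖a - c‖ ^ 2 := by
  have hexpand := norm_sub_sq_real (b - a) (c - a)
  rw [sub_sub_sub_cancel_right, norm_sub_rev c a] at hexpand
  linarith

lemma tendsto_zero_of_le_sub_succ {u d : ℕ → ℝ} {L : ℝ} (hu : Tendsto u atTop (𝓝 L))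
    (hd_nonneg : ∀ k, 0 ≤ d k) (hd : ∀ k, d k ≤ u (k + 1) - u k) :
    Tendsto d atTop (𝓝 0) := by
  have hdiff : Tendsto (fun k => u (k + 1) - u k) atTop (𝓝 0) := by
    simpa using (hu.comp (tendsto_add_atTop_nat 1)).sub hu
  exact squeeze_zero hd_nonneg hd hdiff

/-- If `x_{k+1}` is the projection of `x^g` onto a set contained in
`Q_k = {x : ⟪x − x_k, x^g − x_k⟫ ≤ 0}` and `(‖x_k − x^g‖)` is bounded, then
`‖x_{k+1} − x_k‖² ≤ ‖x_{k+1} − x^g‖² − ‖x_k − x^g‖²`, the sequence `(‖x_k − x^g‖)`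
is nondecreasing and convergent, and `‖x_{k+1} − x_k‖ → 0`. -/
theorem stmt_12 {H : Type*} [NormedAddCommGroup H] [InnerProductSpace ℝ H]
    (xg : H) (x : ℕ → H)
    (hQ : ∀ k, ⟪x (k + 1) - x k, xg - x k⟫ ≤ 0)
    (hbd : ∃ M, ∀ k, ‖x k - xg‖ ≤ M) :
    (∀ k, ‖x (k + 1) - x k‖ ^ 2 ≤ ‖x (k + 1) - xg‖ ^ 2 - ‖x k - xg‖ ^ 2) ∧
    Monotone (fun k => ‖x k - xg‖) ∧
    (∃ L, Tendsto (fun k => ‖x k - xg‖) atTop (𝓝 L)) ∧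
    Tendsto (fun k => ‖x (k + 1) - x k‖) atTop (𝓝 0) := by
  have hstep k := norm_sub_sq_le_of_inner_nonpos (hQ k)
  have hmono : Monotone (fun k => ‖x k - xg‖) := by
    refine monotone_nat_of_le_succ fun k => ?_
    have hsq : ‖x k - xg‖ ^ 2 ≤ ‖x (k + 1) - xg‖ ^ 2 := by
      nlinarith [hstep k, sq_nonneg ‖x (k + 1) - x k‖]
    exact (pow_le_pow_iff_left₀ (norm_nonneg _) (norm_nonneg _) two_ne_zero).mp hsq
  obtain ⟨M, hM⟩ := hbd
  have hlim := tendsto_atTop_ciSup hmono ⟨M, Set.forall_mem_range.2 hM⟩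
  have hsq_lim := tendsto_zero_of_le_sub_succ (hlim.pow 2) (fun k => sq_nonneg _) hstep
  refine ⟨hstep, hmono, ⟨_, hlim⟩, ?_⟩
  simpa using hsq_lim.sqrt
end

section
/- Let C be a nonempty closed convex subset of a real Hilbert space, f an equilibrium bifunction with f(x,·) convex and subdifferentiable on C for each x, and x ∈ C. If y = argmin{ ρ f(x, w) + (1/2)‖w − x‖² : w ∈ C } satisfies y = x, then x ∈ Sol(C, f), i.e., f(x, w) ≥ 0 for all w ∈ C. -/
open RealInnerProductSpace

open Set Filter Topology in
theorem nonneg_of_forall_mul_add_sq_mul_nonneg {a b : ℝ}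
    (h : ∀ t ∈ Ioc (0 : ℝ) 1, 0 ≤ t * a + t ^ 2 * b) : 0 ≤ a := by
  have hdiv : ∀ t ∈ Ioc (0 : ℝ) 1, 0 ≤ a + t * b := fun t ht => by
    nlinarith [h t ht, ht.1]
  have hlim : Tendsto (fun t : ℝ => a + t * b) (𝓝[>] 0) (𝓝 a) :=
    tendsto_nhdsWithin_of_tendsto_nhds <| Continuous.tendsto' (by fun_prop) 0 a (by simp)
  exact ge_of_tendsto hlim (eventually_of_mem (Ioc_mem_nhdsGT one_pos) hdiv)

/-- Along the segment from `x` to `w` the penalty is of second order in the step, while the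
change of `φ` is of first order by convexity. -/
theorem ConvexOn.isMinOn_of_isMinOn_add_mul_sq_norm_sub {E : Type*} [NormedAddCommGroup E]
    [NormedSpace ℝ E] {C : Set E} {φ : E → ℝ} (hφ : ConvexOn ℝ C φ) {x : E} (hx : x ∈ C)
    (c : ℝ) (hmin : IsMinOn (fun w => φ w + c * ‖w - x‖ ^ 2) C x) : IsMinOn φ C x := by
  refine isMinOn_iff.mpr fun w hw => ?_
  suffices 0 ≤ φ w - φ x by linarith
  refine nonneg_of_forall_mul_add_sq_mul_nonneg (b := c * ‖w - x‖ ^ 2) fun t ⟨ht0, ht1⟩ => ?_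
  have hz : (1 - t) • x + t • w ∈ C := hφ.1 hx hw (by linarith) ht0.le (by ring)
  have hconv : φ ((1 - t) • x + t • w) ≤ (1 - t) * φ x + t * φ w :=
    hφ.2 hx hw (by linarith) ht0.le (by ring)
  have hdist : ‖(1 - t) • x + t • w - x‖ ^ 2 = t ^ 2 * ‖w - x‖ ^ 2 := by
    rw [show (1 - t) • x + t • w - x = t • (w - x) by module, norm_smul, Real.norm_of_nonneg ht0.le,
      mul_pow]
  have hle := isMinOn_iff.mp hmin _ hz
  simp only [sub_self, norm_zero, hdist] at hle
  nlinarith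

theorem stmt_14_general {H : Type*} [NormedAddCommGroup H] [InnerProductSpace ℝ H]
    (C : Set H) (f : H → H → ℝ) (hf0 : ∀ x ∈ C, f x x = 0)
    (hconvf : ∀ x ∈ C, ConvexOn ℝ C (f x))
    (ρ : ℝ) (hρ : 0 < ρ) (x : H) (hx : x ∈ C)
    (hmin : ∀ w ∈ C, ρ * f x x + 1 / 2 * ‖x - x‖ ^ 2 ≤ ρ * f x w + 1 / 2 * ‖w - x‖ ^ 2) :
    ∀ w ∈ C, f x w ≥ 0 := by
  have hρf : IsMinOn (fun w => ρ * f x w) C x :=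
    ((hconvf x hx).smul hρ.le).isMinOn_of_isMinOn_add_mul_sq_norm_sub hx (1 / 2)
      (isMinOn_iff.mpr hmin)
  intro w hw
  have := isMinOn_iff.mp hρf w hw
  rw [hf0 x hx, mul_zero] at this
  exact (mul_nonneg_iff_of_pos_left hρ).mp this

/-- If the unique minimizer of `w ↦ ρ f(x, w) + (1/2)‖w − x‖²` over `C` is `x` itself,
then `x` solves the equilibrium problem: `f(x, w) ≥ 0` for all `w ∈ C`. -/
theorem stmt_14 {H : Type*} [NormedAddCommGroup H] [InnerProductSpace ℝ H] [CompleteSpace H]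
    (C : Set H) (hne : C.Nonempty) (hcl : IsClosed C) (hconv : Convex ℝ C)
    (f : H → H → ℝ) (hf0 : ∀ x ∈ C, f x x = 0)
    (hconvf : ∀ x ∈ C, ConvexOn ℝ C (f x))
    (hsubdiff : ∀ x ∈ C, ∀ u ∈ C, ∃ w : H, ∀ v ∈ C, f x v ≥ f x u + ⟪w, v - u⟫)
    (ρ : ℝ) (hρ : 0 < ρ) (x : H) (hx : x ∈ C)
    (hmin : ∀ w ∈ C, ρ * f x x + 1 / 2 * ‖x - x‖ ^ 2 ≤ ρ * f x w + 1 / 2 * ‖w - x‖ ^ 2) :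
    ∀ w ∈ C, f x w ≥ 0 :=
  stmt_14_general C f hf0 hconvf ρ hρ x hx hmin
end

section
/- (Armijo linesearch well-definedness) Let C be a nonempty closed convex subset of an open convex set Ω in a real Hilbert space, and f : Ω × Ω → ℝ jointly weakly continuous with f(x,·) convex and subdifferentiable on C, f(x,x)=0. Let x ∈ C, ρ > 0, μ, η ∈ (0,1), and y = argmin{ ρ f(x, w) + (1/2)‖w − x‖² : w ∈ C } with y ≠ x. Then there exists a smallest positive integer m such that, setting z = (1 − η^m)x + η^m y, one has f(z, x) − f(z, y) ≥ (μ/(2ρ))‖x − y‖². -/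
/-!
The points `z_m = (1 − η^m) x + η^m y` converge strongly, hence weakly, to `x`, so by joint weak
continuity `f(z_m, x) − f(z_m, y) → f(x, x) − f(x, y) = −f(x, y)`. Comparing the minimiser `y`
with the competitor `w = x` gives `f(x, y) ≤ −‖x − y‖² / (2ρ)`, and since `μ < 1` and `y ≠ x`
the limit strictly exceeds `μ ‖x − y‖² / (2ρ)`. The Armijo inequality therefore holds for all
large `m`, and the least positive such `m` exists by well-ordering.
-/

open RealInnerProductSpace Filter Topology

lemma Nat.exists_pos_minimal_of_eventually {P : ℕ → Prop} (h : ∀ᶠ m in atTop, P m) :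
    ∃ m, 0 < m ∧ P m ∧ ∀ m', 0 < m' → P m' → m ≤ m' := by
  classical
  obtain ⟨N, hN⟩ := h.exists_forall_of_atTop
  have hex : ∃ m, 0 < m ∧ P m := ⟨N + 1, N.succ_pos, hN _ N.le_succ⟩
  exact ⟨Nat.find hex, (Nat.find_spec hex).1, (Nat.find_spec hex).2,
    fun m' hpos hP => Nat.find_min' hex ⟨hpos, hP⟩⟩

section LineSearch

variable {E : Type*} [NormedAddCommGroup E] [NormedSpace ℝ E] {η : ℝ}

lemma Convex.one_sub_pow_smul_add_pow_smul_mem {C : Set E} (hC : Convex ℝ C) {x y : E}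
    (hx : x ∈ C) (hy : y ∈ C) (hη₀ : 0 ≤ η) (hη₁ : η ≤ 1) (m : ℕ) :
    (1 - η ^ m) • x + η ^ m • y ∈ C :=
  hC hx hy (sub_nonneg.mpr (pow_le_one₀ hη₀ hη₁)) (pow_nonneg hη₀ m) (sub_add_cancel _ _)

lemma tendsto_one_sub_pow_smul_add_pow_smul (hη₀ : 0 ≤ η) (hη₁ : η < 1) (x y : E) :
    Tendsto (fun m : ℕ => (1 - η ^ m) • x + η ^ m • y) atTop (𝓝 x) := by
  have hpow := tendsto_pow_atTop_nhds_zero_of_lt_one hη₀ hη₁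
  simpa using ((hpow.const_sub 1).smul_const x).add (hpow.smul_const y)

end LineSearch

lemma le_neg_div_of_prox_le_self {H : Type*} [NormedAddCommGroup H] {g : H → ℝ} {ρ : ℝ}
    (hρ : 0 < ρ) {x y : H} (hgx : g x = 0)
    (hmin : ρ * g y + 1 / 2 * ‖y - x‖ ^ 2 ≤ ρ * g x + 1 / 2 * ‖x - x‖ ^ 2) :
    g y ≤ -(1 / (2 * ρ)) * ‖x - y‖ ^ 2 := by
  rw [hgx, sub_self, norm_zero, norm_sub_rev] at hmin
  rw [neg_mul, one_div, inv_mul_eq_div, le_neg, div_le_iff₀ (by positivity)]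
  linarith

theorem stmt_15_general {H : Type*} [NormedAddCommGroup H] [InnerProductSpace ℝ H]
    (C Ω : Set H) (hconv : Convex ℝ C)
    (hCΩ : C ⊆ Ω)
    (f : H → H → ℝ) (hf0 : ∀ x ∈ C, f x x = 0)
    (hwc : ∀ x ∈ Ω, ∀ y ∈ Ω, ∀ (xk yk : ℕ → H), (∀ k, xk k ∈ Ω) → (∀ k, yk k ∈ Ω) →
      (∀ v : H, Tendsto (fun k => ⟪xk k, v⟫) atTop (𝓝 ⟪x, v⟫)) →
      (∀ v : H, Tendsto (fun k => ⟪yk k, v⟫) atTop (𝓝 ⟪y, v⟫)) →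
      Tendsto (fun k => f (xk k) (yk k)) atTop (𝓝 (f x y)))
    (ρ μ η : ℝ) (hρ : 0 < ρ) (hμ : μ ∈ Set.Ioo (0:ℝ) 1) (hη : η ∈ Set.Ioo (0:ℝ) 1)
    (x : H) (hx : x ∈ C) (y : H) (hyC : y ∈ C) (hxy : y ≠ x)
    (hymin : ∀ w ∈ C, ρ * f x y + 1 / 2 * ‖y - x‖ ^ 2 ≤ ρ * f x w + 1 / 2 * ‖w - x‖ ^ 2) :
    ∃ m : ℕ, 0 < m ∧
      f ((1 - η ^ m) • x + η ^ m • y) x - f ((1 - η ^ m) • x + η ^ m • y) y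
        ≥ μ / (2 * ρ) * ‖x - y‖ ^ 2 ∧
      ∀ m' : ℕ, 0 < m' →
        f ((1 - η ^ m') • x + η ^ m' • y) x - f ((1 - η ^ m') • x + η ^ m' • y) y
          ≥ μ / (2 * ρ) * ‖x - y‖ ^ 2 → m ≤ m' := by
  set z : ℕ → H := fun m => (1 - η ^ m) • x + η ^ m • y
  have hzΩ m : z m ∈ Ω :=
    hCΩ (hconv.one_sub_pow_smul_add_pow_smul_mem hx hyC hη.1.le hη.2.le m)
  have hz_weak v : Tendsto (fun m => ⟪z m, v⟫) atTop (𝓝 ⟪x, v⟫) :=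
    (tendsto_one_sub_pow_smul_add_pow_smul hη.1.le hη.2 x y).inner tendsto_const_nhds
  have hlim_at w (hw : w ∈ C) : Tendsto (fun m => f (z m) w) atTop (𝓝 (f x w)) :=
    hwc x (hCΩ hx) w (hCΩ hw) z _ hzΩ (fun _ => hCΩ hw) hz_weak (fun _ => tendsto_const_nhds)
  have hfxy := le_neg_div_of_prox_le_self hρ (hf0 x hx) (hymin x hx)
  have hdist : 0 < ‖x - y‖ ^ 2 := by
    have := norm_pos_iff.mpr (sub_ne_zero.mpr hxy.symm)
    positivity
  have hlimit_gt : μ / (2 * ρ) * ‖x - y‖ ^ 2 < f x x - f x y := by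
    rw [hf0 x hx, div_eq_mul_one_div μ, mul_assoc]
    nlinarith [mul_pos (one_div_pos.mpr (mul_pos two_pos hρ)) hdist, hμ.2]
  exact Nat.exists_pos_minimal_of_eventually <|
    (((hlim_at x hx).sub (hlim_at y hyC)).eventually (eventually_gt_nhds hlimit_gt)).mono
      fun _ h => h.le

/-- Well-definedness of the Armijo linesearch: there exists a smallest positive integer `m`
with `f(z_m, x) − f(z_m, y) ≥ (μ/(2ρ))‖x − y‖²` where `z_m = (1 − η^m) x + η^m y`. -/
theorem stmt_15 {H : Type*} [NormedAddCommGroup H] [InnerProductSpace ℝ H] [CompleteSpace H]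
    (C Ω : Set H) (hne : C.Nonempty) (hcl : IsClosed C) (hconv : Convex ℝ C)
    (hΩopen : IsOpen Ω) (hΩconv : Convex ℝ Ω) (hCΩ : C ⊆ Ω)
    (f : H → H → ℝ) (hf0 : ∀ x ∈ C, f x x = 0)
    (hwc : ∀ x ∈ Ω, ∀ y ∈ Ω, ∀ (xk yk : ℕ → H), (∀ k, xk k ∈ Ω) → (∀ k, yk k ∈ Ω) →
      (∀ v : H, Tendsto (fun k => ⟪xk k, v⟫) atTop (𝓝 ⟪x, v⟫)) →
      (∀ v : H, Tendsto (fun k => ⟪yk k, v⟫) atTop (𝓝 ⟪y, v⟫)) →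
      Tendsto (fun k => f (xk k) (yk k)) atTop (𝓝 (f x y)))
    (hconvf : ∀ x ∈ C, ConvexOn ℝ C (f x))
    (hsubdiff : ∀ x ∈ C, ∀ u ∈ C, ∃ w : H, ∀ v ∈ C, f x v ≥ f x u + ⟪w, v - u⟫)
    (ρ μ η : ℝ) (hρ : 0 < ρ) (hμ : μ ∈ Set.Ioo (0:ℝ) 1) (hη : η ∈ Set.Ioo (0:ℝ) 1)
    (x : H) (hx : x ∈ C) (y : H) (hyC : y ∈ C) (hxy : y ≠ x)
    (hymin : ∀ w ∈ C, ρ * f x y + 1 / 2 * ‖y - x‖ ^ 2 ≤ ρ * f x w + 1 / 2 * ‖w - x‖ ^ 2) :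
    ∃ m : ℕ, 0 < m ∧
      f ((1 - η ^ m) • x + η ^ m • y) x - f ((1 - η ^ m) • x + η ^ m • y) y
        ≥ μ / (2 * ρ) * ‖x - y‖ ^ 2 ∧
      ∀ m' : ℕ, 0 < m' →
        f ((1 - η ^ m') • x + η ^ m' • y) x - f ((1 - η ^ m') • x + η ^ m' • y) y
          ≥ μ / (2 * ρ) * ‖x - y‖ ^ 2 → m ≤ m' :=
  stmt_15_general C Ω hconv hCΩ f hf0 hwc ρ μ η hρ hμ hη x hx y hyC hxy hymin
end

section
/- In the Armijo linesearch setting, with z = (1 − η^m)x + η^m y satisfying f(z, x) − f(z, y) ≥ (μ/(2ρ))‖x − y‖², μ ∈ (0,1), and y ≠ x, one has f(z, x) > 0. Moreover 0 ∉ ∂₂f(z, x). -/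
open RealInnerProductSpace

/-!
Convexity of `f z` along the segment from `x` to `y`, through `z`, gives
`0 = f z z ≤ (1 - η^m) f(z, x) + η^m f(z, y)`, i.e. `η^m (f(z, x) - f(z, y)) ≤ f(z, x)`;
the Armijo inequality makes the left side positive. Since then `f(z, z) = 0 < f(z, x)`,
`x` does not minimise `f z` over `C`, which is what `0 ∈ ∂₂ f(z, x)` would say.
-/

theorem ConvexOn.mul_sub_le_of_map_combo_eq_zero {E : Type*} [AddCommGroup E] [Module ℝ E]
    {s : Set E} {g : E → ℝ} (hg : ConvexOn ℝ s g) {x y : E} (hx : x ∈ s) (hy : y ∈ s)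
    {t : ℝ} (ht0 : 0 ≤ t) (ht1 : t ≤ 1) (hz : g ((1 - t) • x + t • y) = 0) :
    t * (g x - g y) ≤ g x := by
  have hcomb := hg.2 hx hy (sub_nonneg.mpr ht1) ht0 (sub_add_cancel 1 t)
  rw [hz, smul_eq_mul, smul_eq_mul] at hcomb
  linarith

theorem stmt_16_general {H : Type*} [NormedAddCommGroup H] [InnerProductSpace ℝ H]
    (C : Set H) (hconv : Convex ℝ C)
    (f : H → H → ℝ) (hf0 : ∀ w ∈ C, f w w = 0)
    (hconvf : ∀ w ∈ C, ConvexOn ℝ C (f w))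
    (ρ μ η : ℝ) (hρ : 0 < ρ) (hμ : μ ∈ Set.Ioo (0:ℝ) 1) (hη : η ∈ Set.Ioo (0:ℝ) 1)
    (m : ℕ) (hm : 0 < m)
    (x y z : H) (hx : x ∈ C) (hy : y ∈ C) (hxy : y ≠ x)
    (hz : z = (1 - η ^ m) • x + η ^ m • y)
    (harmijo : f z x - f z y ≥ μ / (2 * ρ) * ‖x - y‖ ^ 2) :
    0 < f z x ∧ (0 : H) ∉ {w : H | ∀ v ∈ C, f z v ≥ f z x + ⟪w, v - x⟫} := by
  have ht0 : 0 < η ^ m := pow_pos hη.1 m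
  have ht1 : η ^ m < 1 := pow_lt_one₀ hη.1.le hη.2 hm.ne'
  have hzC : z ∈ C := hz ▸ hconv hx hy (by linarith) ht0.le (by ring)
  have hzz : f z z = 0 := hf0 z hzC
  have hgap : 0 < μ / (2 * ρ) * ‖x - y‖ ^ 2 := by
    have : 0 < ‖x - y‖ := norm_pos_iff.mpr (sub_ne_zero.mpr hxy.symm)
    have := hμ.1
    positivity
  have hconvex_bound : η ^ m * (f z x - f z y) ≤ f z x :=
    (hconvf z hzC).mul_sub_le_of_map_combo_eq_zero hx hy ht0.le ht1.le (hz ▸ hzz)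
  have hfx : 0 < f z x :=
    calc 0 < η ^ m * (μ / (2 * ρ) * ‖x - y‖ ^ 2) := mul_pos ht0 hgap
      _ ≤ η ^ m * (f z x - f z y) := mul_le_mul_of_nonneg_left harmijo ht0.le
      _ ≤ f z x := hconvex_bound
  refine ⟨hfx, fun hsub => ?_⟩
  have hmin : f z z ≥ f z x + ⟪(0 : H), z - x⟫ := hsub z hzC
  rw [inner_zero_left, add_zero, hzz] at hmin
  linarith

/-- In the Armijo linesearch setting, `f(z, x) > 0` and `0 ∉ ∂₂ f(z, x)`. -/
theorem stmt_16 {H : Type*} [NormedAddCommGroup H] [InnerProductSpace ℝ H]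
    (C : Set H) (hne : C.Nonempty) (hcl : IsClosed C) (hconv : Convex ℝ C)
    (f : H → H → ℝ) (hf0 : ∀ w ∈ C, f w w = 0)
    (hconvf : ∀ w ∈ C, ConvexOn ℝ C (f w))
    (ρ μ η : ℝ) (hρ : 0 < ρ) (hμ : μ ∈ Set.Ioo (0:ℝ) 1) (hη : η ∈ Set.Ioo (0:ℝ) 1)
    (m : ℕ) (hm : 0 < m)
    (x y z : H) (hx : x ∈ C) (hy : y ∈ C) (hxy : y ≠ x)
    (hz : z = (1 - η ^ m) • x + η ^ m • y)
    (harmijo : f z x - f z y ≥ μ / (2 * ρ) * ‖x - y‖ ^ 2) :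
    0 < f z x ∧ (0 : H) ∉ {w : H | ∀ v ∈ C, f z v ≥ f z x + ⟪w, v - x⟫} :=
  stmt_16_general C hconv f hf0 hconvf ρ μ η hρ hμ hη m hm x y z hx hy hxy hz harmijo
end

section
/- (Projection-step estimate for the linesearch extragradient method) Let C be a nonempty closed convex subset of a real Hilbert space, f an equilibrium bifunction pseudomonotone on C with respect to Sol(C,f), x ∈ C, z ∈ C with f(z, x) > 0, w ∈ ∂₂f(z, x) with w ≠ 0, σ = f(z, x)/‖w‖², γ ∈ (0,2), and v = P_C(x − γσw). Then for every p ∈ Sol(C,f): ‖v − p‖² ≤ ‖x − p‖² − γ(2 − γ)(σ‖w‖)². -/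
open RealInnerProductSpace

/-! The subgradient inequality at `p`, together with `f(z, p) ≤ 0`, gives `⟪w, x - p⟫ ≥ f(z, x) = σ‖w‖²`:
the hyperplane `⟪w, · - x⟫ = -σ‖w‖²` separates `x` from `Sol(C,f)`. The point `x - γσw` is the relaxed
projection of `x` onto this hyperplane, which brings `x` closer to every `p` by `γ(2 - γ)(σ‖w‖)²` in
squared distance, and the metric projection onto `C` is firmly nonexpansive towards points of `C`. -/

section

variable {F : Type*} [NormedAddCommGroup F] [InnerProductSpace ℝ F]

theorem norm_sub_sq_le_of_forall_norm_sub_le {K : Set F} (hK : Convex ℝ K) {u v p : F}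
    (hv : v ∈ K) (hmin : ∀ b ∈ K, ‖u - v‖ ≤ ‖u - b‖) (hp : p ∈ K) :
    ‖v - p‖ ^ 2 ≤ ‖u - p‖ ^ 2 - ‖u - v‖ ^ 2 := by
  have : Nonempty K := ⟨⟨v, hv⟩⟩
  have hinf : ‖u - v‖ = ⨅ b : K, ‖u - b‖ :=
    le_antisymm (le_ciInf fun b => hmin b b.2)
      (ciInf_le ⟨0, Set.forall_mem_range.2 fun _ => norm_nonneg _⟩ (⟨v, hv⟩ : K))
  have hvi : ⟪u - v, p - v⟫ ≤ 0 := (norm_eq_iInf_iff_real_inner_le_zero hK hv).mp hinf p hp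
  have hflip : ⟪u - v, v - p⟫ = -⟪u - v, p - v⟫ := by
    rw [← inner_neg_right, neg_sub]
  have hsplit : ‖u - p‖ ^ 2 = ‖u - v‖ ^ 2 + 2 * ⟪u - v, v - p⟫ + ‖v - p‖ ^ 2 := by
    rw [← norm_add_sq_real, sub_add_sub_cancel]
  linarith

theorem norm_sub_smul_sub_sq_le {x w p : F} {σ γ : ℝ} (hγσ : 0 ≤ γ * σ)
    (hcut : σ * ‖w‖ ^ 2 ≤ ⟪w, x - p⟫) :
    ‖x - (γ * σ) • w - p‖ ^ 2 ≤ ‖x - p‖ ^ 2 - γ * (2 - γ) * (σ * ‖w‖) ^ 2 := by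
  have hexp : ‖x - (γ * σ) • w - p‖ ^ 2
      = ‖x - p‖ ^ 2 - 2 * (γ * σ) * ⟪w, x - p⟫ + (γ * σ) ^ 2 * ‖w‖ ^ 2 := by
    rw [sub_right_comm, norm_sub_sq_real, real_inner_smul_right, norm_smul, real_inner_comm,
      mul_pow, Real.norm_eq_abs, sq_abs]
    ring
  nlinarith [mul_le_mul_of_nonneg_left hcut hγσ]

end

theorem stmt_17_general {H : Type*} [NormedAddCommGroup H] [InnerProductSpace ℝ H]
    (C : Set H) (hconv : Convex ℝ C)
    (f : H → H → ℝ)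
    (hpseudo : ∀ u ∈ C, ∀ p ∈ {q ∈ C | ∀ y ∈ C, f q y ≥ 0}, f u p ≤ 0)
    (P : H → H)
    (hP : ∀ a : H, P a ∈ C ∧ ∀ b ∈ C, ‖a - P a‖ ≤ ‖a - b‖)
    (x z : H) (hz : z ∈ C) (hfzx : 0 < f z x)
    (w : H) (hw : ∀ v ∈ C, f z v ≥ f z x + ⟪w, v - x⟫) (hw0 : w ≠ 0)
    (σ : ℝ) (hσ : σ = f z x / ‖w‖ ^ 2)
    (γ : ℝ) (hγ : γ ∈ Set.Ioo (0:ℝ) 2)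
    (v : H) (hv : v = P (x - (γ * σ) • w))
    (p : H) (hp : p ∈ {q ∈ C | ∀ y ∈ C, f q y ≥ 0}) :
    ‖v - p‖ ^ 2 ≤ ‖x - p‖ ^ 2 - γ * (2 - γ) * (σ * ‖w‖) ^ 2 := by
  have hσ0 : 0 ≤ σ := hσ ▸ div_nonneg hfzx.le (sq_nonneg _)
  have hσw : σ * ‖w‖ ^ 2 = f z x := by
    rw [hσ]
    exact div_mul_cancel₀ _ (pow_ne_zero 2 (norm_ne_zero_iff.mpr hw0))
  have hcut : σ * ‖w‖ ^ 2 ≤ ⟪w, x - p⟫ := by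
    have hsub := hw p hp.1
    have hflip : ⟪w, p - x⟫ = -⟪w, x - p⟫ := by rw [← inner_neg_right, neg_sub]
    linarith [hpseudo z hz p hp]
  obtain ⟨hvC, hmin⟩ := hP (x - (γ * σ) • w)
  rw [hv]
  calc ‖P (x - (γ * σ) • w) - p‖ ^ 2
      ≤ ‖x - (γ * σ) • w - p‖ ^ 2 - ‖x - (γ * σ) • w - P (x - (γ * σ) • w)‖ ^ 2 :=
        norm_sub_sq_le_of_forall_norm_sub_le hconv hvC hmin hp.1
    _ ≤ ‖x - (γ * σ) • w - p‖ ^ 2 := sub_le_self _ (sq_nonneg _)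
    _ ≤ ‖x - p‖ ^ 2 - γ * (2 - γ) * (σ * ‖w‖) ^ 2 :=
        norm_sub_smul_sub_sq_le (mul_nonneg hγ.1.le hσ0) hcut

/-- Projection-step estimate of the linesearch extragradient method:
`‖v − p‖² ≤ ‖x − p‖² − γ(2 − γ)(σ‖w‖)²` for every `p ∈ Sol(C,f)`. -/
theorem stmt_17 {H : Type*} [NormedAddCommGroup H] [InnerProductSpace ℝ H] [CompleteSpace H]
    (C : Set H) (hne : C.Nonempty) (hcl : IsClosed C) (hconv : Convex ℝ C)
    (f : H → H → ℝ) (hf0 : ∀ u ∈ C, f u u = 0)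
    (hpseudo : ∀ u ∈ C, ∀ p ∈ {q ∈ C | ∀ y ∈ C, f q y ≥ 0}, f u p ≤ 0)
    (P : H → H)
    (hP : ∀ a : H, P a ∈ C ∧ ∀ b ∈ C, ‖a - P a‖ ≤ ‖a - b‖)
    (x z : H) (hx : x ∈ C) (hz : z ∈ C) (hfzx : 0 < f z x)
    (w : H) (hw : ∀ v ∈ C, f z v ≥ f z x + ⟪w, v - x⟫) (hw0 : w ≠ 0)
    (σ : ℝ) (hσ : σ = f z x / ‖w‖ ^ 2)
    (γ : ℝ) (hγ : γ ∈ Set.Ioo (0:ℝ) 2)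
    (v : H) (hv : v = P (x - (γ * σ) • w))
    (p : H) (hp : p ∈ {q ∈ C | ∀ y ∈ C, f q y ≥ 0}) :
    ‖v - p‖ ^ 2 ≤ ‖x - p‖ ^ 2 - γ * (2 - γ) * (σ * ‖w‖) ^ 2 :=
  stmt_17_general C hconv f hpseudo P hP x z hz hfzx w hw hw0 σ hσ γ hγ v hv p hp
end

section
/- Let q be a point of a real Hilbert space, x, t, z, u points with t = αx + (1−α)Tx, u = βt + (1−β)Tz, where α ∈ [0,1], β ∈ [0, β̄] ⊆ [0,1), ‖Tx − q‖ ≤ ‖x − q‖, ‖Tz − q‖ ≤ ‖z − q‖, and ‖z − q‖² ≤ ‖x − q‖² − D with D ≥ 0. Then (1 − β̄) D ≤ ‖x − u‖ (‖x − q‖ + ‖u − q‖). -/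
/-!
Both `t` and `u` are convex combinations of points no farther from `q` than `x` is, and `Tz` is
closer to `q` by the margin `D` in squared distance. Convexity of `‖·‖²` therefore gives
`‖u - q‖² ≤ ‖x - q‖² - (1 - β) D`, and the left-hand side of this gap factors as
`(‖x - q‖ - ‖u - q‖)(‖x - q‖ + ‖u - q‖)`, whose first factor is at most `‖x - u‖`.
-/

theorem norm_smul_add_one_sub_smul_sq_le {E : Type*} [SeminormedAddCommGroup E]
    [NormedSpace ℝ E] {a : ℝ} (ha₀ : 0 ≤ a) (ha₁ : a ≤ 1) (v w : E) :
    ‖a • v + (1 - a) • w‖ ^ 2 ≤ a * ‖v‖ ^ 2 + (1 - a) * ‖w‖ ^ 2 :=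
  (convexOn_univ_norm.pow (fun _ _ ↦ norm_nonneg _) 2).2 trivial trivial ha₀ (sub_nonneg.2 ha₁)
    (by ring)

theorem sq_norm_sub_sq_norm_sub_le {E : Type*} [SeminormedAddCommGroup E] (x y q : E) :
    ‖x - q‖ ^ 2 - ‖y - q‖ ^ 2 ≤ ‖x - y‖ * (‖x - q‖ + ‖y - q‖) := by
  have hdiff : ‖x - q‖ - ‖y - q‖ ≤ ‖x - y‖ := by
    simpa using norm_sub_norm_le (x - q) (y - q)
  rw [sq_sub_sq, mul_comm]
  exact mul_le_mul_of_nonneg_right hdiff (by positivity)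

theorem stmt_19_general {H : Type*} [NormedAddCommGroup H] [InnerProductSpace ℝ H]
    (q x t z u Tx Tz : H)
    (α β βbar D : ℝ)
    (hα : α ∈ Set.Icc (0:ℝ) 1) (hβ : β ∈ Set.Icc (0:ℝ) βbar) (hβbar : βbar < 1)
    (ht : t = α • x + (1 - α) • Tx)
    (hu : u = β • t + (1 - β) • Tz)
    (hTx : ‖Tx - q‖ ≤ ‖x - q‖)
    (hTz : ‖Tz - q‖ ≤ ‖z - q‖)
    (hz : ‖z - q‖ ^ 2 ≤ ‖x - q‖ ^ 2 - D) (hD : 0 ≤ D) :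
    (1 - βbar) * D ≤ ‖x - u‖ * (‖x - q‖ + ‖u - q‖) := by
  obtain ⟨hα₀, hα₁⟩ := hα
  obtain ⟨hβ₀, hββbar⟩ := hβ
  have hβ₁ : β ≤ 1 := by linarith
  have htq : ‖t - q‖ ^ 2 ≤ ‖x - q‖ ^ 2 := calc
    ‖t - q‖ ^ 2 = ‖α • (x - q) + (1 - α) • (Tx - q)‖ ^ 2 := by rw [ht]; congr 2; module
    _ ≤ α * ‖x - q‖ ^ 2 + (1 - α) * ‖Tx - q‖ ^ 2 :=
      norm_smul_add_one_sub_smul_sq_le hα₀ hα₁ _ _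
    _ ≤ α * ‖x - q‖ ^ 2 + (1 - α) * ‖x - q‖ ^ 2 := by gcongr
    _ = ‖x - q‖ ^ 2 := by ring
  have huq : ‖u - q‖ ^ 2 ≤ ‖x - q‖ ^ 2 - (1 - β) * D := calc
    ‖u - q‖ ^ 2 = ‖β • (t - q) + (1 - β) • (Tz - q)‖ ^ 2 := by rw [hu]; congr 2; module
    _ ≤ β * ‖t - q‖ ^ 2 + (1 - β) * ‖Tz - q‖ ^ 2 :=
      norm_smul_add_one_sub_smul_sq_le hβ₀ hβ₁ _ _
    _ ≤ β * ‖x - q‖ ^ 2 + (1 - β) * (‖x - q‖ ^ 2 - D) := by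
      gcongr
      exact (pow_le_pow_left₀ (norm_nonneg _) hTz 2).trans hz
    _ = ‖x - q‖ ^ 2 - (1 - β) * D := by ring
  calc (1 - βbar) * D ≤ (1 - β) * D := by gcongr
    _ ≤ ‖x - q‖ ^ 2 - ‖u - q‖ ^ 2 := by linarith
    _ ≤ ‖x - u‖ * (‖x - q‖ + ‖u - q‖) := sq_norm_sub_sq_norm_sub_le x u q

/-- The key inequality (3.11)/(4.11):
`(1 − β̄) D ≤ ‖x − u‖ (‖x − q‖ + ‖u − q‖)`. -/
theorem stmt_19 {H : Type*} [NormedAddCommGroup H] [InnerProductSpace ℝ H]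
    (q x t z u Tx Tz : H)
    (α β βbar D : ℝ)
    (hα : α ∈ Set.Icc (0:ℝ) 1) (hβ : β ∈ Set.Icc (0:ℝ) βbar) (hβbar : βbar < 1)
    (hβbar0 : 0 ≤ βbar)
    (ht : t = α • x + (1 - α) • Tx)
    (hu : u = β • t + (1 - β) • Tz)
    (hTx : ‖Tx - q‖ ≤ ‖x - q‖)
    (hTz : ‖Tz - q‖ ≤ ‖z - q‖)
    (hz : ‖z - q‖ ^ 2 ≤ ‖x - q‖ ^ 2 - D) (hD : 0 ≤ D) :
    (1 - βbar) * D ≤ ‖x - u‖ * (‖x - q‖ + ‖u - q‖) :=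
  stmt_19_general q x t z u Tx Tz α β βbar D hα hβ hβbar ht hu hTx hTz hz hD
end
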